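/- arXiv:2602.17612 — 11 statements merged into one kernel-verified Lean document; each statement's English description precedes it below -/
import Mathlib

section
/- Let ψ(θ) = U_{M−1}···U₁U₀ ψ_init with U_j = exp(−i θ_j P_j), where each P_j is a Hermitian unitary operator on a finite-dimensional complex Hilbert space, and let E(θ) = ⟨ψ(θ), H ψ(θ)⟩ for a Hermitian operator H. Then the Hessian of E is uniformly bounded: ‖∇²E(θ)‖_op ≤ 4 ‖H‖_op M for all θ ∈ ℝ^M, where ‖·‖_op denotes the operator norm and the Hessian operator norm is sup over unit vectors v ∈ ℝ^M of |vᵀ ∇²E(θ) v|. In particular, E is L-smooth with L = 4‖H‖_op M. -/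
open scoped InnerProductSpace

noncomputable section

variable {V : Type*} [NormedAddCommGroup V] [InnerProductSpace ℂ V] [FiniteDimensional ℂ V]

/-- The gate `U_j = exp(−i θ_j P_j)`. -/
def gateU {M : ℕ} (P : Fin M → V →L[ℂ] V) (θ : Fin M → ℝ) (j : Fin M) : V →L[ℂ] V :=
  NormedSpace.exp ((-Complex.I * (θ j : ℂ)) • P j)

/-- The variational ansatz `ψ(θ) = U_{M−1} ⋯ U₁ U₀ ψ_init`. -/
def ansatz {M : ℕ} (P : Fin M → V →L[ℂ] V) (ψinit : V) (θ : Fin M → ℝ) : V :=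
  (List.ofFn (gateU P θ)).reverse.prod ψinit

/-- The variational energy `E(θ) = ⟨ψ(θ), H ψ(θ)⟩`. -/
def energy {M : ℕ} (P : Fin M → V →L[ℂ] V) (H : V →L[ℂ] V) (ψinit : V)
    (θ : EuclideanSpace ℝ (Fin M)) : ℝ :=
  (⟪ansatz P ψinit (fun j => θ j), H (ansatz P ψinit fun j => θ j)⟫_ℂ).re

set_option linter.unusedSectionVars false
set_option linter.unusedVariables false
set_option maxHeartbeats 1000000
set_option synthInstance.maxHeartbeats 400000

namespace EnergyHessianAux
set_option linter.unusedSectionVars false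
set_option maxHeartbeats 1000000
set_option synthInstance.maxHeartbeats 400000

lemma list_ofFn_rev {α : Type*} {n : ℕ} (w : Fin n → α) :
    List.ofFn (fun i => w i.rev) = (List.ofFn w).reverse := by
  apply List.ext_getElem
  · simp
  · intro i h1 h2
    simp only [List.getElem_ofFn, List.getElem_reverse, List.length_ofFn]
    congr 1
    apply Fin.ext
    simp [Fin.rev]
    omega

def FF {M : ℕ} (ψ : V) : ContinuousMultilinearMap ℝ (fun _ : Fin M => V →L[ℂ] V) V :=
  ((ContinuousLinearMap.apply ℂ V ψ).restrictScalars ℝ).compContinuousMultilinearMap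
    ((ContinuousMultilinearMap.mkPiAlgebraFin ℝ M (V →L[ℂ] V)).domDomCongr Fin.revPerm)

lemma FF_apply {M : ℕ} (ψ : V) (w : Fin M → V →L[ℂ] V) :
    FF ψ w = (List.ofFn w).reverse.prod ψ := by
  rw [← list_ofFn_rev]
  simp [FF]

lemma list_prod_apply_norm_le (l : List (V →L[ℂ] V)) (h : ∀ a ∈ l, ‖a‖ ≤ 1) (x : V) :
    ‖l.prod x‖ ≤ ‖x‖ := by
  induction l with
  | nil => simp
  | cons a l ih =>
    rw [List.prod_cons, ContinuousLinearMap.mul_apply]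
    calc ‖a (l.prod x)‖ ≤ ‖a‖ * ‖l.prod x‖ := a.le_opNorm _
    _ ≤ 1 * ‖x‖ := by
        apply mul_le_mul (h a (by simp)) (ih fun b hb => h b (by simp [hb])) (norm_nonneg _)
          zero_le_one
    _ = ‖x‖ := one_mul _

lemma FF_norm_le {M : ℕ} (ψ : V) (w : Fin M → V →L[ℂ] V) (hw : ∀ j, ‖w j‖ ≤ 1) :
    ‖FF ψ w‖ ≤ ‖ψ‖ := by
  rw [FF_apply]
  apply list_prod_apply_norm_le
  intro a ha
  rw [List.mem_reverse, List.mem_ofFn] at ha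
  obtain ⟨i, rfl⟩ := ha
  exact hw i



variable {V : Type*} [NormedAddCommGroup V] [InnerProductSpace ℂ V] [FiniteDimensional ℂ V]

def cg (Q : V →L[ℂ] V) (n : ℕ) (t : ℝ) : V →L[ℂ] V :=
  ((-Complex.I) • Q) ^ n * NormedSpace.exp (t • ((-Complex.I) • Q))

lemma cg_hasDerivAt (Q : V →L[ℂ] V) (n : ℕ) (t : ℝ) :
    HasDerivAt (fun s => cg Q n s) (cg Q (n + 1) t) t := by
  have h : HasDerivAt (fun u : ℝ => NormedSpace.exp (u • ((-Complex.I) • Q)))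
      (((-Complex.I) • Q) * NormedSpace.exp (t • ((-Complex.I) • Q))) t := by
    exact hasDerivAt_exp_smul_const' (𝕂 := ℝ) (𝔸 := V →L[ℂ] V) ((-Complex.I) • Q) t
  have h2 := h.const_mul (((-Complex.I) • Q) ^ n)
  simpa only [cg, pow_succ, mul_assoc] using h2

lemma cg_norm_le [Nontrivial V] {Q : V →L[ℂ] V} (hQ : IsSelfAdjoint Q)
    (hQu : Q ∈ unitary (V →L[ℂ] V)) (n : ℕ) (t : ℝ) : ‖cg Q n t‖ ≤ 1 := by
  have hb : ‖(-Complex.I) • Q‖ = 1 := by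
    have hns := norm_smul (α := ℂ) (β := V →L[ℂ] V) (-Complex.I) Q
    rw [hns, CStarRing.norm_of_mem_unitary hQu]
    simp
  have hskew : t • ((-Complex.I) • Q) ∈ skewAdjoint (V →L[ℂ] V) := by
    rw [skewAdjoint.mem_iff, star_smul, star_smul, star_trivial, hQ.star_eq]
    simp only [Complex.star_def, map_neg, Complex.conj_I, neg_smul, smul_neg, neg_neg]
  have hexp : ‖NormedSpace.exp (t • ((-Complex.I) • Q))‖ = 1 :=
    CStarRing.norm_of_mem_unitary
      (by letI : NormedAlgebra ℚ (V →L[ℂ] V) := .restrictScalars ℚ ℂ _; exact NormedSpace.exp_mem_unitary_of_mem_skewAdjoint hskew)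
  calc ‖cg Q n t‖ ≤ ‖((-Complex.I) • Q) ^ n‖ * ‖NormedSpace.exp (t • ((-Complex.I) • Q))‖ :=
        norm_mul_le _ _
  _ ≤ ‖(-Complex.I) • Q‖ ^ n * 1 := by
      rw [hexp]
      exact mul_le_mul_of_nonneg_right (norm_pow_le _ _) zero_le_one
  _ = 1 := by rw [hb, one_pow, mul_one]



variable {M : ℕ}

def slots (P : Fin M → V →L[ℂ] V) (K : Fin M → ℕ) (θ : EuclideanSpace ℝ (Fin M)) :
    Fin M → V →L[ℂ] V :=
  fun j => cg (P j) (K j) (θ j)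

def Psi (P : Fin M → V →L[ℂ] V) (ψ : V) (K : Fin M → ℕ) (θ : EuclideanSpace ℝ (Fin M)) : V :=
  FF ψ (slots P K θ)

def upd (K : Fin M → ℕ) (i : Fin M) : Fin M → ℕ := Function.update K i (K i + 1)

def DPsi (P : Fin M → V →L[ℂ] V) (ψ : V) (K : Fin M → ℕ) (θ : EuclideanSpace ℝ (Fin M)) :
    EuclideanSpace ℝ (Fin M) →L[ℝ] V :=
  ∑ i, ((FF ψ).toContinuousLinearMap (slots P K θ) i) ∘L
    (((1 : ℝ →L[ℝ] ℝ).smulRight (cg (P i) (K i + 1) (θ i))) ∘L (EuclideanSpace.proj i))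

lemma Psi_hasFDerivAt (P : Fin M → V →L[ℂ] V) (ψ : V) (K : Fin M → ℕ)
    (θ : EuclideanSpace ℝ (Fin M)) : HasFDerivAt (Psi P ψ K) (DPsi P ψ K θ) θ := by
  have hg : ∀ i, HasFDerivAt (fun θ' : EuclideanSpace ℝ (Fin M) => cg (P i) (K i) (θ' i))
      ((((1 : ℝ →L[ℝ] ℝ).smulRight (cg (P i) (K i + 1) (θ i))) ∘L (EuclideanSpace.proj i))) θ := by
    intro i
    have h1 : HasFDerivAt (fun t : ℝ => cg (P i) (K i) t)
        ((1 : ℝ →L[ℝ] ℝ).smulRight (cg (P i) (K i + 1) (θ i))) (θ i) :=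
      hasDerivAt_iff_hasFDerivAt.mp (cg_hasDerivAt _ _ _)
    have h2 : HasFDerivAt (fun θ' : EuclideanSpace ℝ (Fin M) => θ' i)
        (EuclideanSpace.proj i : EuclideanSpace ℝ (Fin M) →L[ℝ] ℝ) θ :=
      (EuclideanSpace.proj (𝕜 := ℝ) i).hasFDerivAt
    exact h1.comp θ h2
  exact HasFDerivAt.multilinear_comp (FF ψ) hg

lemma slots_update (P : Fin M → V →L[ℂ] V) (K : Fin M → ℕ) (θ : EuclideanSpace ℝ (Fin M))
    (i : Fin M) :
    Function.update (slots P K θ) i (cg (P i) (K i + 1) (θ i)) = slots P (upd K i) θ := by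
  funext j
  rcases eq_or_ne j i with rfl | hj
  · simp [slots, upd]
  · simp [slots, upd, Function.update_apply, hj]

lemma DPsi_apply (P : Fin M → V →L[ℂ] V) (ψ : V) (K : Fin M → ℕ)
    (θ : EuclideanSpace ℝ (Fin M)) (v : EuclideanSpace ℝ (Fin M)) :
    DPsi P ψ K θ v = ∑ i, (v i) • Psi P ψ (upd K i) θ := by
  simp only [DPsi, ContinuousLinearMap.sum_apply, ContinuousLinearMap.comp_apply,
    PiLp.proj_apply, ContinuousLinearMap.smulRight_apply,
    ContinuousLinearMap.one_apply]
  refine Finset.sum_congr rfl fun i _ => ?_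
  rw [map_smul, ContinuousMultilinearMap.toContinuousLinearMap_apply, slots_update]
  rfl

lemma Psi_norm_le [Nontrivial V] {P : Fin M → V →L[ℂ] V} (hP : ∀ j, IsSelfAdjoint (P j))
    (hPu : ∀ j, P j ∈ unitary (V →L[ℂ] V)) (ψ : V) (K : Fin M → ℕ)
    (θ : EuclideanSpace ℝ (Fin M)) : ‖Psi P ψ K θ‖ ≤ ‖ψ‖ :=
  FF_norm_le ψ _ fun j => cg_norm_le (hP j) (hPu j) _ _

def en (P : Fin M → V →L[ℂ] V) (H : V →L[ℂ] V) (ψ : V) (K K' : Fin M → ℕ)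
    (θ : EuclideanSpace ℝ (Fin M)) : ℝ :=
  (⟪Psi P ψ K θ, H (Psi P ψ K' θ)⟫_ℂ).re

def Den (P : Fin M → V →L[ℂ] V) (H : V →L[ℂ] V) (ψ : V) (K K' : Fin M → ℕ)
    (θ : EuclideanSpace ℝ (Fin M)) : EuclideanSpace ℝ (Fin M) →L[ℝ] ℝ :=
  ∑ i, (en P H ψ (upd K i) K' θ + en P H ψ K (upd K' i) θ) •
    (EuclideanSpace.proj i : EuclideanSpace ℝ (Fin M) →L[ℝ] ℝ)

lemma en_hasFDerivAt (P : Fin M → V →L[ℂ] V) (H : V →L[ℂ] V) (ψ : V) (K K' : Fin M → ℕ)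
    (θ : EuclideanSpace ℝ (Fin M)) :
    HasFDerivAt (en P H ψ K K') (Den P H ψ K K' θ) θ := by
  have h1 := Psi_hasFDerivAt P ψ K θ
  have h2' := Psi_hasFDerivAt P ψ K' θ
  have h2 : HasFDerivAt (fun θ' => H (Psi P ψ K' θ'))
      ((H.restrictScalars ℝ) ∘L DPsi P ψ K' θ) θ :=
    ((H.restrictScalars ℝ).hasFDerivAt).comp θ h2'
  have h3 := h1.inner ℂ h2
  have h4 := (Complex.reCLM.hasFDerivAt).comp θ h3
  refine h4.congr_fderiv ?_
  ext v
  simp only [ContinuousLinearMap.comp_apply, fderivInnerCLM_apply, ContinuousLinearMap.prod_apply,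
    ContinuousLinearMap.coe_restrictScalars', DPsi_apply, map_sum,
    ContinuousLinearMap.map_smul_of_tower, inner_sum, sum_inner, inner_smul_real_left,
    inner_smul_real_right, Complex.reCLM_apply, Den, en,
    ContinuousLinearMap.sum_apply, ContinuousLinearMap.smul_apply, PiLp.proj_apply]
  simp only [← Complex.coe_smul, inner_smul_left, inner_smul_right, Complex.conj_ofReal,
    Complex.re_sum, Complex.add_re, Complex.re_ofReal_mul, smul_eq_mul]
  rw [← Finset.sum_add_distrib]
  refine Finset.sum_congr rfl fun i _ => ?_
  ring

lemma Den_hasFDerivAt (P : Fin M → V →L[ℂ] V) (H : V →L[ℂ] V) (ψ : V) (K K' : Fin M → ℕ)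
    (θ : EuclideanSpace ℝ (Fin M)) :
    HasFDerivAt (fun θ' => Den P H ψ K K' θ')
      (∑ i, (Den P H ψ (upd K i) K' θ + Den P H ψ K (upd K' i) θ).smulRight
        (EuclideanSpace.proj i : EuclideanSpace ℝ (Fin M) →L[ℝ] ℝ)) θ := by
  exact HasFDerivAt.fun_sum fun i _ =>
    ((en_hasFDerivAt P H ψ (upd K i) K' θ).fun_add (en_hasFDerivAt P H ψ K (upd K' i) θ)).smul_const
      (EuclideanSpace.proj i : EuclideanSpace ℝ (Fin M) →L[ℝ] ℝ)

lemma en_abs_le [Nontrivial V] {P : Fin M → V →L[ℂ] V} (hP : ∀ j, IsSelfAdjoint (P j))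
    (hPu : ∀ j, P j ∈ unitary (V →L[ℂ] V)) (H : V →L[ℂ] V) {ψ : V} (hψ : ‖ψ‖ = 1)
    (K K' : Fin M → ℕ) (θ : EuclideanSpace ℝ (Fin M)) : |en P H ψ K K' θ| ≤ ‖H‖ := by
  have h1 : |en P H ψ K K' θ| ≤ ‖⟪Psi P ψ K θ, H (Psi P ψ K' θ)⟫_ℂ‖ := by
    exact Complex.abs_re_le_norm _
  have ha := Psi_norm_le hP hPu ψ K θ
  have hb := Psi_norm_le hP hPu ψ K' θ
  rw [hψ] at ha hb
  refine h1.trans ?_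
  calc ‖⟪Psi P ψ K θ, H (Psi P ψ K' θ)⟫_ℂ‖ ≤ ‖Psi P ψ K θ‖ * ‖H (Psi P ψ K' θ)‖ :=
        norm_inner_le_norm _ _
  _ ≤ 1 * (‖H‖ * 1) := by
      refine mul_le_mul ha ?_ (norm_nonneg _) zero_le_one
      exact (H.le_opNorm _).trans (mul_le_mul_of_nonneg_left hb (norm_nonneg _))
  _ = ‖H‖ := by ring

lemma Den_apply_abs_le [Nontrivial V] {P : Fin M → V →L[ℂ] V} (hP : ∀ j, IsSelfAdjoint (P j))
    (hPu : ∀ j, P j ∈ unitary (V →L[ℂ] V)) (H : V →L[ℂ] V) {ψ : V} (hψ : ‖ψ‖ = 1)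
    (K K' : Fin M → ℕ) (θ : EuclideanSpace ℝ (Fin M)) (v : EuclideanSpace ℝ (Fin M)) :
    |Den P H ψ K K' θ v| ≤ (2 * ‖H‖) * ∑ i, |v i| := by
  rw [Den]
  simp only [ContinuousLinearMap.sum_apply, ContinuousLinearMap.smul_apply, PiLp.proj_apply,
    smul_eq_mul]
  calc |∑ i, (en P H ψ (upd K i) K' θ + en P H ψ K (upd K' i) θ) * v i|
      ≤ ∑ i, |(en P H ψ (upd K i) K' θ + en P H ψ K (upd K' i) θ) * v i| :=
        Finset.abs_sum_le_sum_abs _ _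
  _ ≤ ∑ i, (2 * ‖H‖) * |v i| := by
      refine Finset.sum_le_sum fun i _ => ?_
      rw [abs_mul]
      refine mul_le_mul_of_nonneg_right ?_ (abs_nonneg _)
      calc |en P H ψ (upd K i) K' θ + en P H ψ K (upd K' i) θ|
          ≤ |en P H ψ (upd K i) K' θ| + |en P H ψ K (upd K' i) θ| := abs_add_le _ _
      _ ≤ ‖H‖ + ‖H‖ := add_le_add (en_abs_le hP hPu H hψ _ _ _) (en_abs_le hP hPu H hψ _ _ _)
      _ = 2 * ‖H‖ := by ring
  _ = (2 * ‖H‖) * ∑ i, |v i| := by rw [Finset.mul_sum]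

lemma sum_abs_le_sqrt_card (v : EuclideanSpace ℝ (Fin M)) :
    ∑ i, |v i| ≤ Real.sqrt M * ‖v‖ := by
  have h1 : (∑ i, |v i|) ^ 2 ≤ (M : ℝ) * ∑ i, |v i| ^ 2 := by
    simpa using sq_sum_le_card_mul_sum_sq (s := (Finset.univ : Finset (Fin M)))
      (f := fun i => |v i|)
  have hnorm : ‖v‖ = Real.sqrt (∑ i, |v i| ^ 2) := by
    rw [EuclideanSpace.norm_eq]
    simp [Real.norm_eq_abs]
  calc ∑ i, |v i| = Real.sqrt ((∑ i, |v i|) ^ 2) := by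
        rw [Real.sqrt_sq (Finset.sum_nonneg fun i _ => abs_nonneg _)]
  _ ≤ Real.sqrt ((M : ℝ) * ∑ i, |v i| ^ 2) := Real.sqrt_le_sqrt h1
  _ = Real.sqrt M * Real.sqrt (∑ i, |v i| ^ 2) := Real.sqrt_mul (Nat.cast_nonneg _) _
  _ = Real.sqrt M * ‖v‖ := by rw [hnorm]

end EnergyHessianAux

open EnergyHessianAux

/-- The Hessian of the variational energy of the Pauli-rotation
ansatz is uniformly bounded in operator norm: `‖∇²E(θ)‖_op ≤ 4‖H‖_op M`; in
particular `E` is `L`-smooth with `L = 4‖H‖_op M`. -/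
theorem energy_hessian_bound
    {M : ℕ} (P : Fin M → V →L[ℂ] V)
    (hP : ∀ j, IsSelfAdjoint (P j)) (hPu : ∀ j, P j ∈ unitary (V →L[ℂ] V))
    (H : V →L[ℂ] V) (hH : IsSelfAdjoint H)
    (ψinit : V) (hinit : ‖ψinit‖ = 1) :
    ∀ θ : EuclideanSpace ℝ (Fin M),
      ‖iteratedFDeriv ℝ 2 (energy P H ψinit) θ‖ ≤ 4 * ‖H‖ * M := by
  intro θ
  classical
  haveI : Nontrivial V := by
    refine ⟨ψinit, 0, fun h => ?_⟩
    rw [h, norm_zero] at hinit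
    exact one_ne_zero hinit.symm
  set K0 : Fin M → ℕ := fun _ => 0 with hK0
  have hE : energy P H ψinit = en P H ψinit K0 K0 := by
    funext θ'
    have hgate : gateU P (fun j => θ' j) = slots P K0 θ' := by
      funext j
      simp only [gateU, slots, cg, hK0, pow_zero, one_mul]
      congr 1
      rw [← Complex.coe_smul, smul_smul, mul_comm]
    simp only [energy, en, Psi, FF_apply, ansatz, hgate]
  have hfd : fderiv ℝ (en P H ψinit K0 K0) = fun θ' => Den P H ψinit K0 K0 θ' :=
    funext fun θ' => (en_hasFDerivAt P H ψinit K0 K0 θ').fderiv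
  rw [hE]
  refine ContinuousMultilinearMap.opNorm_le_bound (by positivity) fun m => ?_
  rw [iteratedFDeriv_two_apply, hfd, (Den_hasFDerivAt P H ψinit K0 K0 θ).fderiv]
  simp only [ContinuousLinearMap.sum_apply, ContinuousLinearMap.smulRight_apply,
    ContinuousLinearMap.smul_apply, PiLp.proj_apply, smul_eq_mul, ContinuousLinearMap.add_apply]
  set S0 := ∑ j, |(m 0) j| with hS0def
  set S1 := ∑ i, |(m 1) i| with hS1def
  have hS0 : S0 ≤ Real.sqrt M * ‖m 0‖ := sum_abs_le_sqrt_card (m 0)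
  have hS1 : S1 ≤ Real.sqrt M * ‖m 1‖ := sum_abs_le_sqrt_card (m 1)
  have hS0n : 0 ≤ S0 := Finset.sum_nonneg fun _ _ => abs_nonneg _
  have hS1n : 0 ≤ S1 := Finset.sum_nonneg fun _ _ => abs_nonneg _
  have hc : ∀ i : Fin M,
      |Den P H ψinit (upd K0 i) K0 θ (m 0) + Den P H ψinit K0 (upd K0 i) θ (m 0)|
        ≤ (4 * ‖H‖) * S0 := by
    intro i
    calc |Den P H ψinit (upd K0 i) K0 θ (m 0) + Den P H ψinit K0 (upd K0 i) θ (m 0)|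
        ≤ |Den P H ψinit (upd K0 i) K0 θ (m 0)| + |Den P H ψinit K0 (upd K0 i) θ (m 0)| :=
          abs_add_le _ _
    _ ≤ (2 * ‖H‖) * S0 + (2 * ‖H‖) * S0 :=
          add_le_add (Den_apply_abs_le hP hPu H hinit _ _ _ _)
            (Den_apply_abs_le hP hPu H hinit _ _ _ _)
    _ = (4 * ‖H‖) * S0 := by ring
  rw [Real.norm_eq_abs, Fin.prod_univ_two]
  calc |∑ i, (Den P H ψinit (upd K0 i) K0 θ (m 0) + Den P H ψinit K0 (upd K0 i) θ (m 0)) * (m 1) i|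
      ≤ ∑ i, |(Den P H ψinit (upd K0 i) K0 θ (m 0) + Den P H ψinit K0 (upd K0 i) θ (m 0)) * (m 1) i| :=
        Finset.abs_sum_le_sum_abs _ _
  _ ≤ ∑ i, ((4 * ‖H‖) * S0) * |(m 1) i| := by
      refine Finset.sum_le_sum fun i _ => ?_
      rw [abs_mul]
      exact mul_le_mul_of_nonneg_right (hc i) (abs_nonneg _)
  _ = ((4 * ‖H‖) * S0) * S1 := by rw [← Finset.mul_sum]
  _ ≤ ((4 * ‖H‖) * (Real.sqrt M * ‖m 0‖)) * (Real.sqrt M * ‖m 1‖) := by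
      refine mul_le_mul (mul_le_mul_of_nonneg_left hS0 (by positivity)) hS1 hS1n (by positivity)
  _ = (4 * ‖H‖) * (Real.sqrt M * Real.sqrt M) * (‖m 0‖ * ‖m 1‖) := by ring
  _ = 4 * ‖H‖ * M * (‖m 0‖ * ‖m 1‖) := by
      rw [Real.mul_self_sqrt (Nat.cast_nonneg M)]

end
end

section
/- Let ψ(θ) = U_{M−1}···U₁U₀ ψ_init with U_j = exp(−i θ_j P_j), where each P_j is a Hermitian unitary operator on a finite-dimensional complex Hilbert space, and let E(θ) = ⟨ψ(θ), H ψ(θ)⟩ for a Hermitian operator H. Then the Hessian of E is Lipschitz continuous: for all θ, θ' ∈ ℝ^M, ‖∇²E(θ') − ∇²E(θ)‖_op ≤ 24 ‖H‖_op M^{3/2} ‖θ' − θ‖₂. -/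
set_option linter.unusedSectionVars false
set_option maxHeartbeats 1000000

open scoped InnerProductSpace

noncomputable section

variable {V : Type*} [NormedAddCommGroup V] [InnerProductSpace ℂ V] [FiniteDimensional ℂ V]

namespace ELAux

open NormedSpace ContinuousLinearMap

variable {M : ℕ} {P : Fin M → V →L[ℂ] V}

/-- `α j = -i P j`. -/
def alpha (P : Fin M → V →L[ℂ] V) (j : Fin M) : V →L[ℂ] V := (-Complex.I) • P j

/-- `dg j k t = (-i P j)^k exp(-i t P j)`, the `k`-th derivative of the gate. -/
def dg (P : Fin M → V →L[ℂ] V) (j : Fin M) (k : ℕ) (t : ℝ) : V →L[ℂ] V :=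
  alpha P j ^ k * exp (t • alpha P j)

theorem alpha_mem (hP : ∀ j, IsSelfAdjoint (P j)) (hPu : ∀ j, P j ∈ unitary (V →L[ℂ] V))
    (j : Fin M) : alpha P j ∈ unitary (V →L[ℂ] V) := by
  have hPP : P j * P j = 1 := by
    have := (hPu j).1
    rwa [(hP j).star_eq] at this
  have h1 : star (alpha P j) = Complex.I • P j := by
    rw [alpha, star_smul, (hP j).star_eq]
    simp
  constructor
  · rw [h1]
    show (Complex.I • P j) * ((-Complex.I) • P j) = 1
    rw [smul_mul_smul_comm, hPP]
    simp [Complex.I_mul_I]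
  · rw [h1]
    show ((-Complex.I) • P j) * (Complex.I • P j) = 1
    rw [smul_mul_smul_comm, hPP]
    simp [Complex.I_mul_I]

theorem smul_alpha_eq (j : Fin M) (t : ℝ) :
    t • alpha P j = (-Complex.I * (t : ℂ)) • P j := by
  rw [alpha, ← IsScalarTower.algebraMap_smul ℂ t ((-Complex.I) • P j), smul_smul]
  congr 1
  simp [Complex.coe_algebraMap, mul_comm]

theorem exp_mem (hP : ∀ j, IsSelfAdjoint (P j)) (j : Fin M) (t : ℝ) :
    exp (t • alpha P j) ∈ unitary (V →L[ℂ] V) := by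
  let +nondep : NormedAlgebra ℚ (V →L[ℂ] V) := .restrictScalars ℚ ℂ (V →L[ℂ] V)
  apply exp_mem_unitary_of_mem_skewAdjoint
  rw [skewAdjoint.mem_iff, smul_alpha_eq, star_smul, (hP j).star_eq, ← neg_smul]
  congr 1
  simp

theorem dg_mem (hP : ∀ j, IsSelfAdjoint (P j)) (hPu : ∀ j, P j ∈ unitary (V →L[ℂ] V))
    (j : Fin M) (k : ℕ) (t : ℝ) : dg P j k t ∈ unitary (V →L[ℂ] V) :=
  mul_mem (pow_mem (alpha_mem hP hPu j) k) (exp_mem hP j t)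

theorem hasDerivAt_dg (j : Fin M) (k : ℕ) (t : ℝ) :
    HasDerivAt (dg P j k) (dg P j (k + 1) t) t := by
  have h := (hasDerivAt_exp_smul_const' (𝕂 := ℝ) (alpha P j) t).const_mul (alpha P j ^ k)
  have hk : dg P j (k + 1) t = alpha P j ^ k * (alpha P j * exp (t • alpha P j)) := by
    rw [dg, pow_succ, mul_assoc]
  rw [hk]
  exact h

/-- product of (differentiated) gates, reading the gates in reversed order. -/
def Fop (P : Fin M → V →L[ℂ] V) (n : Fin M → ℕ) (θ : EuclideanSpace ℝ (Fin M)) : V →L[ℂ] V :=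
  ContinuousMultilinearMap.mkPiAlgebraFin ℝ M (V →L[ℂ] V)
    (fun i => dg P i.rev (n i.rev) (θ i.rev))

/-- increase by one the number of derivatives applied to gate `j`. -/
def bump (j : Fin M) (n : Fin M → ℕ) : Fin M → ℕ := Function.update n j (n j + 1)

theorem update_dg_eq (n : Fin M → ℕ) (θ : EuclideanSpace ℝ (Fin M)) (i : Fin M) :
    Function.update (fun i' => dg P i'.rev (n i'.rev) (θ i'.rev)) i
      (dg P i.rev (n i.rev + 1) (θ i.rev))
      = fun i' => dg P i'.rev ((bump i.rev n) i'.rev) (θ i'.rev) := by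
  funext i'
  by_cases h : i' = i
  · subst h; simp [bump]
  · have h2 : i'.rev ≠ i.rev := fun hh => h (Fin.rev_injective hh)
    simp [Function.update_of_ne h, bump, Function.update_of_ne h2]

theorem hasFDerivAt_Fop (n : Fin M → ℕ) (θ : EuclideanSpace ℝ (Fin M)) :
    HasFDerivAt (Fop P n)
      (∑ j, (EuclideanSpace.proj (𝕜 := ℝ) j).smulRight (Fop P (bump j n) θ)) θ := by
  classical
  set Φ' : EuclideanSpace ℝ (Fin M) →L[ℝ] (Fin M → (V →L[ℂ] V)) :=
    ContinuousLinearMap.pi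
      (fun i => (EuclideanSpace.proj (𝕜 := ℝ) i.rev).smulRight
        (dg P i.rev (n i.rev + 1) (θ i.rev))) with hΦ'
  have hG : HasFDerivAt
      (fun θ' : EuclideanSpace ℝ (Fin M) => fun i => dg P i.rev (n i.rev) (θ' i.rev)) Φ' θ := by
    apply hasFDerivAt_pi''
    intro i
    have hc : HasFDerivAt (fun θ' : EuclideanSpace ℝ (Fin M) => θ' i.rev)
        (EuclideanSpace.proj (𝕜 := ℝ) i.rev) θ :=
      ContinuousLinearMap.hasFDerivAt (EuclideanSpace.proj (𝕜 := ℝ) i.rev)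
    have h2 := ((hasDerivAt_dg (P := P) i.rev (n i.rev) (θ i.rev)).hasFDerivAt).comp θ hc
    have h4 : ((proj i).comp Φ' : EuclideanSpace ℝ (Fin M) →L[ℝ] (V →L[ℂ] V))
        = ((1 : ℝ →L[ℝ] ℝ).smulRight (dg P i.rev (n i.rev + 1) (θ i.rev))).comp
            (EuclideanSpace.proj (𝕜 := ℝ) i.rev) := by
      ext u
      simp [hΦ']
    rw [h4]
    exact h2
  have hmul := (ContinuousMultilinearMap.mkPiAlgebraFin ℝ M (V →L[ℂ] V)).hasFDerivAt
    (x := fun i => dg P i.rev (n i.rev) (θ i.rev))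
  have h3 := hmul.comp θ hG
  have key : ((ContinuousMultilinearMap.mkPiAlgebraFin ℝ M (V →L[ℂ] V)).linearDeriv
      (fun i => dg P i.rev (n i.rev) (θ i.rev))).comp Φ'
      = ∑ j, (EuclideanSpace.proj (𝕜 := ℝ) j).smulRight (Fop P (bump j n) θ) := by
    refine ContinuousLinearMap.ext fun u => ?_
    rw [ContinuousLinearMap.comp_apply, ContinuousMultilinearMap.linearDeriv_apply,
      ContinuousLinearMap.sum_apply]
    refine Fintype.sum_equiv Fin.revPerm _ _ fun i => ?_
    have hΦu : Φ' u i = (u i.rev) • dg P i.rev (n i.rev + 1) (θ i.rev) := by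
      simp [hΦ']
    rw [hΦu, ContinuousMultilinearMap.map_update_smul, update_dg_eq,
      Fin.revPerm_apply, ContinuousLinearMap.smulRight_apply]
    rfl
  rw [← key]
  exact h3

section norms

variable [Nontrivial V]

instance : Nontrivial (V →L[ℂ] V) := by
  obtain ⟨x, hx⟩ := exists_ne (0 : V)
  exact ⟨1, 0, fun h => hx (by simpa using ContinuousLinearMap.ext_iff.1 h x)⟩

theorem norm_Fop_le (hP : ∀ j, IsSelfAdjoint (P j)) (hPu : ∀ j, P j ∈ unitary (V →L[ℂ] V))
    (n : Fin M → ℕ) (θ : EuclideanSpace ℝ (Fin M)) : ‖Fop P n θ‖ ≤ 1 := by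
  haveI : NormOneClass (V →L[ℂ] V) := ⟨CStarRing.norm_one⟩
  have h0 : ‖Fop P n θ‖ ≤ ‖ContinuousMultilinearMap.mkPiAlgebraFin ℝ M (V →L[ℂ] V)‖ *
      ∏ i : Fin M, ‖dg P i.rev (n i.rev) (θ i.rev)‖ :=
    ContinuousMultilinearMap.le_opNorm
      (ContinuousMultilinearMap.mkPiAlgebraFin ℝ M (V →L[ℂ] V))
      (fun i => dg P i.rev (n i.rev) (θ i.rev))
  refine h0.trans ?_
  calc ‖ContinuousMultilinearMap.mkPiAlgebraFin ℝ M (V →L[ℂ] V)‖ *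
      ∏ i : Fin M, ‖dg P i.rev (n i.rev) (θ i.rev)‖
      = ∏ i : Fin M, ‖dg P i.rev (n i.rev) (θ i.rev)‖ := by
        rw [ContinuousMultilinearMap.norm_mkPiAlgebraFin, one_mul]
    _ ≤ 1 := by
        apply Finset.prod_le_one
        · intro i _; positivity
        · intro i _; exact le_of_eq (CStarRing.norm_of_mem_unitary (dg_mem hP hPu _ _ _))

end norms

/-- the (differentiated) ansatz state. -/
def Fv (P : Fin M → V →L[ℂ] V) (ψ : V) (n : Fin M → ℕ) (θ : EuclideanSpace ℝ (Fin M)) : V :=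
  Fop P n θ ψ

theorem norm_Fv_le [Nontrivial V] (hP : ∀ j, IsSelfAdjoint (P j))
    (hPu : ∀ j, P j ∈ unitary (V →L[ℂ] V)) {ψ : V} (hψ : ‖ψ‖ = 1)
    (n : Fin M → ℕ) (θ : EuclideanSpace ℝ (Fin M)) : ‖Fv P ψ n θ‖ ≤ 1 := by
  calc ‖Fop P n θ ψ‖ ≤ ‖Fop P n θ‖ * ‖ψ‖ := ContinuousLinearMap.le_opNorm _ _
    _ ≤ 1 := by rw [hψ, mul_one]; exact norm_Fop_le hP hPu n θ

theorem hasFDerivAt_Fv (ψ : V) (n : Fin M → ℕ) (θ : EuclideanSpace ℝ (Fin M)) :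
    HasFDerivAt (Fv P ψ n)
      (∑ j, (EuclideanSpace.proj (𝕜 := ℝ) j).smulRight (Fv P ψ (bump j n) θ)) θ := by
  have hL := (((ContinuousLinearMap.apply ℂ V ψ).restrictScalars ℝ).hasFDerivAt
    (x := Fop P n θ)).comp θ (hasFDerivAt_Fop n θ)
  have heq : (((ContinuousLinearMap.apply ℂ V ψ).restrictScalars ℝ).comp
      (∑ j, (EuclideanSpace.proj (𝕜 := ℝ) j).smulRight (Fop P (bump j n) θ)))
      = ∑ j, (EuclideanSpace.proj (𝕜 := ℝ) j).smulRight (Fv P ψ (bump j n) θ) := by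
    ext u
    simp [Fv]
  rw [← heq]
  exact hL

/-- the matrix elements `⟨F_n ψ, H F_m ψ⟩.re`. -/
def en (P : Fin M → V →L[ℂ] V) (H : V →L[ℂ] V) (ψ : V) (n m : Fin M → ℕ)
    (θ : EuclideanSpace ℝ (Fin M)) : ℝ :=
  (⟪Fv P ψ n θ, H (Fv P ψ m θ)⟫_ℂ).re

theorem abs_en_le [Nontrivial V] (hP : ∀ j, IsSelfAdjoint (P j))
    (hPu : ∀ j, P j ∈ unitary (V →L[ℂ] V)) (H : V →L[ℂ] V) {ψ : V} (hψ : ‖ψ‖ = 1)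
    (n m : Fin M → ℕ) (θ : EuclideanSpace ℝ (Fin M)) : |en P H ψ n m θ| ≤ ‖H‖ := by
  have h1 : |en P H ψ n m θ| ≤ ‖(⟪Fv P ψ n θ, H (Fv P ψ m θ)⟫_ℂ)‖ := Complex.abs_re_le_norm _
  refine h1.trans ?_
  calc ‖(⟪Fv P ψ n θ, H (Fv P ψ m θ)⟫_ℂ)‖ ≤ ‖Fv P ψ n θ‖ * ‖H (Fv P ψ m θ)‖ :=
      norm_inner_le_norm _ _
    _ ≤ 1 * (‖H‖ * 1) := by
        apply mul_le_mul (norm_Fv_le hP hPu hψ n θ) ?_ (norm_nonneg _) zero_le_one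
        calc ‖H (Fv P ψ m θ)‖ ≤ ‖H‖ * ‖Fv P ψ m θ‖ := H.le_opNorm _
          _ ≤ ‖H‖ * 1 := mul_le_mul_of_nonneg_left (norm_Fv_le hP hPu hψ m θ) (norm_nonneg _)
    _ = ‖H‖ := by ring

theorem hasFDerivAt_en (H : V →L[ℂ] V) (ψ : V) (n m : Fin M → ℕ)
    (θ : EuclideanSpace ℝ (Fin M)) :
    HasFDerivAt (en P H ψ n m)
      (∑ j, (EuclideanSpace.proj (𝕜 := ℝ) j).smulRight
        (en P H ψ (bump j n) m θ + en P H ψ n (bump j m) θ)) θ := by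
  have hf := hasFDerivAt_Fv (P := P) ψ n θ
  have hg := ((H.restrictScalars ℝ).hasFDerivAt (x := Fv P ψ m θ)).comp θ
    (hasFDerivAt_Fv (P := P) ψ m θ)
  have hinner := (hf.inner ℂ hg)
  have hre := (Complex.reCLM.hasFDerivAt (x := ⟪Fv P ψ n θ, H (Fv P ψ m θ)⟫_ℂ)).comp θ hinner
  have heq : (Complex.reCLM.comp ((fderivInnerCLM ℂ (Fv P ψ n θ, H (Fv P ψ m θ))).comp
      ((∑ j, (EuclideanSpace.proj (𝕜 := ℝ) j).smulRight (Fv P ψ (bump j n) θ)).prod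
        ((H.restrictScalars ℝ).comp
          (∑ j, (EuclideanSpace.proj (𝕜 := ℝ) j).smulRight (Fv P ψ (bump j m) θ))))))
      = ∑ j, (EuclideanSpace.proj (𝕜 := ℝ) j).smulRight
        (en P H ψ (bump j n) m θ + en P H ψ n (bump j m) θ) := by
    ext u
    simp only [ContinuousLinearMap.comp_apply, ContinuousLinearMap.prod_apply,
      fderivInnerCLM_apply, ContinuousLinearMap.sum_apply,
      ContinuousLinearMap.smulRight_apply, Complex.reCLM_apply, map_sum, map_smul,
      inner_sum, sum_inner, en]
    simp only [Complex.add_re, Complex.re_sum]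
    rw [← Finset.sum_add_distrib]
    congr 1
    funext j
    have hs : ∀ (r : ℝ) (x : V), r • x = (r : ℂ) • x := fun r x =>
      (IsScalarTower.algebraMap_smul ℂ r x).symm
    rw [hs, hs, inner_smul_left, inner_smul_right, Complex.conj_ofReal,
      Complex.mul_re, Complex.mul_re]
    simp only [smul_eq_mul, Complex.ofReal_re, Complex.ofReal_im, zero_mul, sub_zero,
      ContinuousLinearMap.coe_restrictScalars']
    ring
  rw [← heq]
  exact hre

theorem list_ofFn_reverse {α : Type*} {m : ℕ} (f : Fin m → α) :
    (List.ofFn f).reverse = List.ofFn (fun i => f i.rev) := by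
  apply List.ext_getElem
  · simp
  · intro i h1 h2
    simp only [List.getElem_reverse, List.getElem_ofFn]
    congr 1
    simp only [List.length_ofFn] at h1 h2 ⊢
    ext
    simp [Fin.rev]
    omega

theorem dg_zero_eq (j : Fin M) (t : ℝ) :
    dg P j 0 t = exp ((-Complex.I * (t : ℂ)) • P j) := by
  rw [dg, pow_zero, one_mul, smul_alpha_eq]

theorem ansatz_eq (ψ : V) (θ : EuclideanSpace ℝ (Fin M)) :
    ansatz P ψ (fun j => θ j) = Fv P ψ (fun _ => 0) θ := by
  rw [ansatz, Fv, Fop, ContinuousMultilinearMap.mkPiAlgebraFin_apply]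
  congr 1
  rw [list_ofFn_reverse]
  have h : (fun i : Fin M => gateU P (fun j => θ j) i.rev)
      = fun i : Fin M => dg P i.rev 0 (θ i.rev) := by
    funext i
    rw [dg_zero_eq]
    rfl
  rw [h]

theorem sum_abs_le (u : EuclideanSpace ℝ (Fin M)) :
    ∑ j, |u j| ≤ Real.sqrt M * ‖u‖ := by
  classical
  set v : EuclideanSpace ℝ (Fin M) := WithLp.toLp 2 (fun j => |u j|) with hv
  set w : EuclideanSpace ℝ (Fin M) := WithLp.toLp 2 (fun _ => 1) with hw
  have h1 : ⟪w, v⟫_ℝ = ∑ j, |u j| := by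
    rw [PiLp.inner_apply]
    simp [hv, hw]
  have h2 : ‖w‖ = Real.sqrt M := by
    rw [EuclideanSpace.norm_eq]
    simp [hw]
  have h3 : ‖v‖ = ‖u‖ := by
    rw [EuclideanSpace.norm_eq, EuclideanSpace.norm_eq]
    congr 1
    apply Finset.sum_congr rfl
    intro j _
    simp [hv, sq_abs]
  calc ∑ j, |u j| = ⟪w, v⟫_ℝ := h1.symm
    _ ≤ ‖w‖ * ‖v‖ := real_inner_le_norm _ _
    _ = Real.sqrt M * ‖u‖ := by rw [h2, h3]

theorem norm_sum_smulRight_le {C : ℝ} (hC : 0 ≤ C) (a : Fin M → ℝ) (ha : ∀ j, |a j| ≤ C) :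
    ‖∑ j, (EuclideanSpace.proj (𝕜 := ℝ) j).smulRight (a j)‖ ≤ C * Real.sqrt M := by
  refine ContinuousLinearMap.opNorm_le_bound _ (by positivity) fun u => ?_
  rw [ContinuousLinearMap.sum_apply]
  calc ‖∑ j, ((EuclideanSpace.proj (𝕜 := ℝ) j).smulRight (a j)) u‖
      ≤ ∑ j, ‖((EuclideanSpace.proj (𝕜 := ℝ) j).smulRight (a j)) u‖ := norm_sum_le _ _
    _ ≤ ∑ j, C * |u j| := by
        apply Finset.sum_le_sum
        intro j _
        rw [ContinuousLinearMap.smulRight_apply]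
        simp only [smul_eq_mul, Real.norm_eq_abs, abs_mul]
        rw [mul_comm]
        exact mul_le_mul_of_nonneg_right (ha j) (abs_nonneg _)
    _ = C * ∑ j, |u j| := by rw [Finset.mul_sum]
    _ ≤ C * (Real.sqrt M * ‖u‖) := mul_le_mul_of_nonneg_left (sum_abs_le u) hC
    _ = C * Real.sqrt M * ‖u‖ := by ring

end ELAux

/-- The Hessian of the variational energy of the Pauli-rotation
ansatz is Lipschitz continuous in operator norm with constant `24‖H‖_op M^{3/2}`:
`‖∇²E(θ') − ∇²E(θ)‖_op ≤ 24‖H‖_op M^{3/2} ‖θ' − θ‖₂`. -/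
theorem energy_hessian_lipschitz
    {M : ℕ} (P : Fin M → V →L[ℂ] V)
    (hP : ∀ j, IsSelfAdjoint (P j)) (hPu : ∀ j, P j ∈ unitary (V →L[ℂ] V))
    (H : V →L[ℂ] V) (hH : IsSelfAdjoint H)
    (ψinit : V) (hinit : ‖ψinit‖ = 1) :
    ∀ θ θ' : EuclideanSpace ℝ (Fin M),
      ‖iteratedFDeriv ℝ 2 (energy P H ψinit) θ' - iteratedFDeriv ℝ 2 (energy P H ψinit) θ‖
        ≤ 24 * ‖H‖ * (M : ℝ) ^ ((3 : ℝ) / 2) * ‖θ' - θ‖ := by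
  classical
  intro θ θ'
  haveI : Nontrivial V := by
    refine ⟨ψinit, 0, fun h => ?_⟩
    rw [h] at hinit
    simp at hinit
  set z : Fin M → ℕ := fun _ => 0 with hz
  set b := ELAux.bump (M := M) with hb
  -- `E = en z z`
  have hEeq : energy P H ψinit = ELAux.en P H ψinit z z := by
    funext ϑ
    rw [energy, ELAux.en, ELAux.ansatz_eq]
  -- abbreviation for en
  set e : (Fin M → ℕ) → (Fin M → ℕ) → EuclideanSpace ℝ (Fin M) → ℝ :=
    ELAux.en P H ψinit with he
  have he_le : ∀ n m ϑ, |e n m ϑ| ≤ ‖H‖ := fun n m ϑ =>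
    ELAux.abs_en_le hP hPu H hinit n m ϑ
  have he_d : ∀ n m ϑ, HasFDerivAt (e n m)
      (∑ j, (EuclideanSpace.proj (𝕜 := ℝ) j).smulRight
        (e (b j n) m ϑ + e n (b j m) ϑ)) ϑ := fun n m ϑ =>
    ELAux.hasFDerivAt_en H ψinit n m ϑ
  -- first derivative
  set c1 : Fin M → EuclideanSpace ℝ (Fin M) → ℝ := fun j ϑ =>
    e (b j z) z ϑ + e z (b j z) ϑ with hc1def
  have hfderiv : fderiv ℝ (energy P H ψinit)
      = fun ϑ => ∑ j, (EuclideanSpace.proj (𝕜 := ℝ) j).smulRight (c1 j ϑ) := by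
    funext ϑ
    rw [hEeq]
    exact (he_d z z ϑ).fderiv
  -- second derivative coefficients
  set h2 : Fin M → Fin M → EuclideanSpace ℝ (Fin M) → ℝ := fun j k ϑ =>
    (e (b k (b j z)) z ϑ + e (b j z) (b k z) ϑ) +
    (e (b k z) (b j z) ϑ + e z (b k (b j z)) ϑ) with hh2def
  have hc1d : ∀ j ϑ, HasFDerivAt (c1 j)
      (∑ k, (EuclideanSpace.proj (𝕜 := ℝ) k).smulRight (h2 j k ϑ)) ϑ := by
    intro j ϑ
    have h := (he_d (b j z) z ϑ).add (he_d z (b j z) ϑ)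
    have hsum : (∑ k, (EuclideanSpace.proj (𝕜 := ℝ) k).smulRight
          (e (b k (b j z)) z ϑ + e (b j z) (b k z) ϑ)) +
        (∑ k, (EuclideanSpace.proj (𝕜 := ℝ) k).smulRight
          (e (b k z) (b j z) ϑ + e z (b k (b j z)) ϑ))
        = ∑ k, (EuclideanSpace.proj (𝕜 := ℝ) k).smulRight (h2 j k ϑ) := by
      rw [← Finset.sum_add_distrib]
      refine Finset.sum_congr rfl fun k _ => ?_
      ext u
      simp only [ContinuousLinearMap.add_apply, ContinuousLinearMap.smulRight_apply,
        smul_eq_mul, hh2def]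
      ring
    rw [← hsum]
    exact h
  -- the second derivative as a map into continuous linear maps
  set D2 : EuclideanSpace ℝ (Fin M) →
      (EuclideanSpace ℝ (Fin M) →L[ℝ] EuclideanSpace ℝ (Fin M) →L[ℝ] ℝ) := fun ϑ =>
    ∑ j, (ContinuousLinearMap.smulRightL ℝ (EuclideanSpace ℝ (Fin M)) ℝ
        (EuclideanSpace.proj (𝕜 := ℝ) j)).comp
      (∑ k, (EuclideanSpace.proj (𝕜 := ℝ) k).smulRight (h2 j k ϑ)) with hD2def
  have hD2 : ∀ ϑ, HasFDerivAt
      (fun ϑ' => ∑ j, (EuclideanSpace.proj (𝕜 := ℝ) j).smulRight (c1 j ϑ')) (D2 ϑ) ϑ := by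
    intro ϑ
    rw [hD2def]
    apply HasFDerivAt.fun_sum
    intro j _
    exact (ContinuousLinearMap.hasFDerivAt
      (ContinuousLinearMap.smulRightL ℝ (EuclideanSpace ℝ (Fin M)) ℝ
        (EuclideanSpace.proj (𝕜 := ℝ) j))).comp ϑ (hc1d j ϑ)
  have hfd2 : ∀ ϑ, fderiv ℝ (fderiv ℝ (energy P H ψinit)) ϑ = D2 ϑ := by
    intro ϑ
    rw [hfderiv]
    exact (hD2 ϑ).fderiv
  have happly : ∀ ϑ (u v : EuclideanSpace ℝ (Fin M)),
      D2 ϑ u v = ∑ j, v j * ∑ k, u k * h2 j k ϑ := by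
    intro ϑ u v
    rw [hD2def]
    rw [ContinuousLinearMap.sum_apply, ContinuousLinearMap.sum_apply]
    refine Finset.sum_congr rfl fun j _ => ?_
    have hsrl : ∀ (r : ℝ), (ContinuousLinearMap.smulRightL ℝ (EuclideanSpace ℝ (Fin M)) ℝ
        (EuclideanSpace.proj (𝕜 := ℝ) j)) r
        = (EuclideanSpace.proj (𝕜 := ℝ) j).smulRight r := fun r => rfl
    rw [ContinuousLinearMap.comp_apply, hsrl,
      ContinuousLinearMap.smulRight_apply, ContinuousLinearMap.sum_apply]
    simp only [ContinuousLinearMap.smulRight_apply, smul_eq_mul]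
    simp only [Finset.mul_sum]
    refine Finset.sum_congr rfl fun k _ => ?_
    have hv : (EuclideanSpace.proj (𝕜 := ℝ) j) v = v j := rfl
    have hu : (EuclideanSpace.proj (𝕜 := ℝ) k) u = u k := rfl
    rw [hv, hu]
  -- Lipschitz bound on the second derivative coefficients
  have hlip : ∀ j k, |h2 j k θ' - h2 j k θ| ≤ 8 * ‖H‖ * Real.sqrt M * ‖θ' - θ‖ := by
    intro j k
    -- derivative of h2 j k
    set w : Fin M → EuclideanSpace ℝ (Fin M) → ℝ := fun l ϑ =>
      ((e (b l (b k (b j z))) z ϑ + e (b k (b j z)) (b l z) ϑ) +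
       (e (b l (b j z)) (b k z) ϑ + e (b j z) (b l (b k z)) ϑ)) +
      ((e (b l (b k z)) (b j z) ϑ + e (b k z) (b l (b j z)) ϑ) +
       (e (b l z) (b k (b j z)) ϑ + e z (b l (b k (b j z))) ϑ)) with hwdef
    have hwd : ∀ ϑ, HasFDerivAt (h2 j k)
        (∑ l, (EuclideanSpace.proj (𝕜 := ℝ) l).smulRight (w l ϑ)) ϑ := by
      intro ϑ
      have h := ((he_d (b k (b j z)) z ϑ).add (he_d (b j z) (b k z) ϑ)).add
        ((he_d (b k z) (b j z) ϑ).add (he_d z (b k (b j z)) ϑ))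
      have hsum : ((∑ l, (EuclideanSpace.proj (𝕜 := ℝ) l).smulRight
            (e (b l (b k (b j z))) z ϑ + e (b k (b j z)) (b l z) ϑ)) +
          (∑ l, (EuclideanSpace.proj (𝕜 := ℝ) l).smulRight
            (e (b l (b j z)) (b k z) ϑ + e (b j z) (b l (b k z)) ϑ))) +
          ((∑ l, (EuclideanSpace.proj (𝕜 := ℝ) l).smulRight
            (e (b l (b k z)) (b j z) ϑ + e (b k z) (b l (b j z)) ϑ)) +
          (∑ l, (EuclideanSpace.proj (𝕜 := ℝ) l).smulRight
            (e (b l z) (b k (b j z)) ϑ + e z (b l (b k (b j z))) ϑ)))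
          = ∑ l, (EuclideanSpace.proj (𝕜 := ℝ) l).smulRight (w l ϑ) := by
        rw [← Finset.sum_add_distrib, ← Finset.sum_add_distrib, ← Finset.sum_add_distrib]
        refine Finset.sum_congr rfl fun l _ => ?_
        ext u
        simp only [ContinuousLinearMap.add_apply, ContinuousLinearMap.smulRight_apply,
          smul_eq_mul, hwdef]
        ring
      rw [← hsum]
      exact h
    have hwb : ∀ l ϑ, |w l ϑ| ≤ 8 * ‖H‖ := by
      intro l ϑ
      have t2 : ∀ {x y cx cy : ℝ}, |x| ≤ cx → |y| ≤ cy → |x + y| ≤ cx + cy :=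
        fun hx hy => (abs_add_le _ _).trans (add_le_add hx hy)
      have hW := t2 (t2 (t2 (he_le (b l (b k (b j z))) z ϑ) (he_le (b k (b j z)) (b l z) ϑ))
          (t2 (he_le (b l (b j z)) (b k z) ϑ) (he_le (b j z) (b l (b k z)) ϑ)))
        (t2 (t2 (he_le (b l (b k z)) (b j z) ϑ) (he_le (b k z) (b l (b j z)) ϑ))
          (t2 (he_le (b l z) (b k (b j z)) ϑ) (he_le z (b l (b k (b j z))) ϑ)))
      simp only [hwdef]
      linarith [hW]
    have hC : (0 : ℝ) ≤ 8 * ‖H‖ := by positivity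
    have hmvt := convex_univ.norm_image_sub_le_of_norm_hasFDerivWithin_le
      (f := h2 j k) (f' := fun ϑ => ∑ l, (EuclideanSpace.proj (𝕜 := ℝ) l).smulRight (w l ϑ))
      (fun ϑ _ => (hwd ϑ).hasFDerivWithinAt)
      (fun ϑ _ => ELAux.norm_sum_smulRight_le hC _ (fun l => hwb l ϑ))
      (Set.mem_univ θ) (Set.mem_univ θ')
    simpa [Real.norm_eq_abs, mul_assoc] using hmvt
  -- assemble the final bound
  have hM0 : (0 : ℝ) ≤ Real.sqrt M := Real.sqrt_nonneg _
  have hpow : Real.sqrt M * Real.sqrt M * Real.sqrt M = (M : ℝ) ^ ((3 : ℝ) / 2) := by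
    rcases Nat.eq_zero_or_pos M with h | h
    · subst h
      norm_num
    · have hMpos : (0 : ℝ) < M := by exact_mod_cast h
      rw [Real.sqrt_eq_rpow, ← Real.rpow_add hMpos, ← Real.rpow_add hMpos]
      norm_num
  refine ContinuousMultilinearMap.opNorm_le_bound (by positivity) fun m => ?_
  have hTm : (iteratedFDeriv ℝ 2 (energy P H ψinit) θ'
        - iteratedFDeriv ℝ 2 (energy P H ψinit) θ) m
      = ∑ j, (m 1) j * ∑ k, (m 0) k * (h2 j k θ' - h2 j k θ) := by
    rw [ContinuousMultilinearMap.sub_apply, iteratedFDeriv_two_apply, iteratedFDeriv_two_apply,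
      hfd2 θ', hfd2 θ, happly, happly, ← Finset.sum_sub_distrib]
    refine Finset.sum_congr rfl fun j _ => ?_
    rw [← mul_sub, ← Finset.sum_sub_distrib]
    congr 1
    refine Finset.sum_congr rfl fun k _ => ?_
    ring
  rw [Real.norm_eq_abs, hTm]
  have hstep : |∑ j, (m 1) j * ∑ k, (m 0) k * (h2 j k θ' - h2 j k θ)|
      ≤ (∑ j, |(m 1) j|) * ((∑ k, |(m 0) k|) * (8 * ‖H‖ * Real.sqrt M * ‖θ' - θ‖)) := by
    calc |∑ j, (m 1) j * ∑ k, (m 0) k * (h2 j k θ' - h2 j k θ)|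
        ≤ ∑ j, |(m 1) j * ∑ k, (m 0) k * (h2 j k θ' - h2 j k θ)| :=
          Finset.abs_sum_le_sum_abs _ _
      _ ≤ ∑ j, |(m 1) j| * ((∑ k, |(m 0) k|) * (8 * ‖H‖ * Real.sqrt M * ‖θ' - θ‖)) := by
          refine Finset.sum_le_sum fun j _ => ?_
          rw [abs_mul]
          refine mul_le_mul_of_nonneg_left ?_ (abs_nonneg _)
          calc |∑ k, (m 0) k * (h2 j k θ' - h2 j k θ)|
              ≤ ∑ k, |(m 0) k * (h2 j k θ' - h2 j k θ)| := Finset.abs_sum_le_sum_abs _ _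
            _ ≤ ∑ k, |(m 0) k| * (8 * ‖H‖ * Real.sqrt M * ‖θ' - θ‖) := by
                refine Finset.sum_le_sum fun k _ => ?_
                rw [abs_mul]
                exact mul_le_mul_of_nonneg_left (hlip j k) (abs_nonneg _)
            _ = (∑ k, |(m 0) k|) * (8 * ‖H‖ * Real.sqrt M * ‖θ' - θ‖) := by
                rw [← Finset.sum_mul]
      _ = (∑ j, |(m 1) j|) * ((∑ k, |(m 0) k|) * (8 * ‖H‖ * Real.sqrt M * ‖θ' - θ‖)) := by
          rw [← Finset.sum_mul]
  refine hstep.trans ?_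
  have hm1 : ∑ j, |(m 1) j| ≤ Real.sqrt M * ‖m 1‖ := ELAux.sum_abs_le _
  have hm0 : ∑ k, |(m 0) k| ≤ Real.sqrt M * ‖m 0‖ := ELAux.sum_abs_le _
  have habs1 : (0 : ℝ) ≤ ∑ j, |(m 1) j| := Finset.sum_nonneg fun _ _ => abs_nonneg _
  have habs0 : (0 : ℝ) ≤ ∑ k, |(m 0) k| := Finset.sum_nonneg fun _ _ => abs_nonneg _
  have hfac : (0 : ℝ) ≤ 8 * ‖H‖ * Real.sqrt M * ‖θ' - θ‖ := by positivity
  calc (∑ j, |(m 1) j|) * ((∑ k, |(m 0) k|) * (8 * ‖H‖ * Real.sqrt M * ‖θ' - θ‖))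
      ≤ (Real.sqrt M * ‖m 1‖) * ((Real.sqrt M * ‖m 0‖) * (8 * ‖H‖ * Real.sqrt M * ‖θ' - θ‖)) := by
        apply mul_le_mul hm1 ?_ (by positivity) (by positivity)
        exact mul_le_mul hm0 le_rfl hfac (by positivity)
    _ = 8 * ‖H‖ * (Real.sqrt M * Real.sqrt M * Real.sqrt M) * ‖θ' - θ‖ * (‖m 0‖ * ‖m 1‖) := by
        ring
    _ ≤ 24 * ‖H‖ * (M : ℝ) ^ ((3 : ℝ) / 2) * ‖θ' - θ‖ * (‖m 0‖ * ‖m 1‖) := by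
        rw [hpow]
        have h824 : (8 : ℝ) * ‖H‖ * ((M : ℝ) ^ ((3 : ℝ) / 2)) * ‖θ' - θ‖
            ≤ 24 * ‖H‖ * ((M : ℝ) ^ ((3 : ℝ) / 2)) * ‖θ' - θ‖ := by
          have : (0 : ℝ) ≤ ‖H‖ * ((M : ℝ) ^ ((3 : ℝ) / 2)) * ‖θ' - θ‖ := by positivity
          nlinarith
        exact mul_le_mul_of_nonneg_right h824 (by positivity)
    _ = 24 * ‖H‖ * (M : ℝ) ^ ((3 : ℝ) / 2) * ‖θ' - θ‖ * ∏ i, ‖m i‖ := by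
        rw [Fin.prod_univ_two]

end
end

section
/- Let H be a Hermitian operator on a finite-dimensional complex inner product space with a unit eigenvector ψ₀ satisfying H ψ₀ = E₀ ψ₀, and suppose that ⟨φ, H φ⟩ ≥ E₀ + Δ for every unit vector φ orthogonal to ψ₀, where Δ > 0 (i.e., ψ₀ is a nondegenerate ground state with spectral gap at least Δ). Then for every Hermitian operator A, ⟨ψ₀, [A, [H, A]] ψ₀⟩ = 2 ⟨ψ₀, A (H − E₀) A ψ₀⟩ ≥ 2Δ ( ⟨ψ₀, A² ψ₀⟩ − ⟨ψ₀, A ψ₀⟩² ). -/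
open scoped InnerProductSpace

/-- For a Hermitian operator `H` on a finite-dimensional complex inner
product space with nondegenerate ground state `ψ₀` (eigenvalue `E₀`, spectral gap ≥ `Δ`),
and any Hermitian `A`, the ground-state expectation of the double commutator
`[A,[H,A]]` equals `2⟨ψ₀, A(H−E₀)Aψ₀⟩` and is bounded below by
`2Δ(⟨ψ₀,A²ψ₀⟩ − ⟨ψ₀,Aψ₀⟩²)`. -/
theorem double_commutator_ground_state_bound
    {V : Type*} [NormedAddCommGroup V] [InnerProductSpace ℂ V] [FiniteDimensional ℂ V]
    (H : V →L[ℂ] V) (hH : IsSelfAdjoint H)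
    (ψ₀ : V) (hψ₀ : ‖ψ₀‖ = 1) (E₀ : ℝ) (heig : H ψ₀ = (E₀ : ℂ) • ψ₀)
    (Δ : ℝ) (hΔ : 0 < Δ)
    (hgap : ∀ φ : V, ‖φ‖ = 1 → ⟪ψ₀, φ⟫_ℂ = 0 → E₀ + Δ ≤ (⟪φ, H φ⟫_ℂ).re)
    (A : V →L[ℂ] V) (hA : IsSelfAdjoint A) :
    (⟪ψ₀, (A * (H * A - A * H) - (H * A - A * H) * A) ψ₀⟫_ℂ).re
      = 2 * (⟪ψ₀, (A * (H - (E₀ : ℂ) • 1) * A) ψ₀⟫_ℂ).re ∧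
    2 * Δ * ((⟪ψ₀, (A * A) ψ₀⟫_ℂ).re - (⟪ψ₀, A ψ₀⟫_ℂ).re ^ 2)
      ≤ 2 * (⟪ψ₀, (A * (H - (E₀ : ℂ) • 1) * A) ψ₀⟫_ℂ).re := by
  have hHs : ∀ x y : V, ⟪H x, y⟫_ℂ = ⟪x, H y⟫_ℂ := fun x y => hH.isSymmetric x y
  have hAs : ∀ x y : V, ⟪A x, y⟫_ℂ = ⟪x, A y⟫_ℂ := fun x y => hA.isSymmetric x y
  set v := A ψ₀ with hv
  have hX : ⟪ψ₀, (A * (H - (E₀ : ℂ) • 1) * A) ψ₀⟫_ℂ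
      = ⟪v, H v⟫_ℂ - (E₀ : ℂ) * ⟪v, v⟫_ℂ := by
    simp only [ContinuousLinearMap.mul_apply, ContinuousLinearMap.sub_apply,
      ContinuousLinearMap.smul_apply, ContinuousLinearMap.one_apply, map_sub, map_smul,
      inner_sub_right, inner_smul_right]
    rw [← hAs ψ₀ (H v), ← hAs ψ₀ v]
  constructor
  · have h1 : ⟪ψ₀, (A * (H * A - A * H) - (H * A - A * H) * A) ψ₀⟫_ℂ
        = 2 * (⟪v, H v⟫_ℂ - (E₀ : ℂ) * ⟪v, v⟫_ℂ) := by
      have t1 : ⟪ψ₀, A (H (A ψ₀))⟫_ℂ = ⟪v, H v⟫_ℂ := (hAs ψ₀ (H (A ψ₀))).symm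
      have t2 : ⟪ψ₀, A (A ((E₀ : ℂ) • ψ₀))⟫_ℂ = (E₀ : ℂ) * ⟪v, v⟫_ℂ := by
        rw [map_smul, map_smul, inner_smul_right, ← hAs ψ₀ (A ψ₀)]
      have t3 : ⟪ψ₀, H (A (A ψ₀))⟫_ℂ = (E₀ : ℂ) * ⟪v, v⟫_ℂ := by
        rw [← hHs ψ₀ (A (A ψ₀)), heig, inner_smul_left, Complex.conj_ofReal,
          ← hAs ψ₀ (A ψ₀)]
      simp only [ContinuousLinearMap.mul_apply, ContinuousLinearMap.sub_apply, map_sub,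
        inner_sub_right, heig]
      rw [t1, t2, t3]
      ring
    rw [hX, h1, Complex.mul_re]
    norm_num
  · rw [hX]
    set c := ⟪ψ₀, v⟫_ℂ with hc
    have hcreal : (starRingEnd ℂ) c = c := by
      rw [hc, inner_conj_symm]
      exact hAs ψ₀ ψ₀
    set w := v - c • ψ₀ with hw
    have hψn : ⟪ψ₀, ψ₀⟫_ℂ = 1 := by
      rw [inner_self_eq_norm_sq_to_K, hψ₀]; norm_num
    have hworth : ⟪ψ₀, w⟫_ℂ = 0 := by
      simp [hw, inner_sub_right, inner_smul_right, hψn, hc, hψ₀]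
    have hBψ : H ψ₀ - (E₀ : ℂ) • ψ₀ = 0 := by rw [heig]; simp
    -- ⟪v, Hv⟫ - E₀⟪v,v⟫ = ⟪w, Hw⟫ - E₀⟪w,w⟫
    have hkey : ⟪v, H v⟫_ℂ - (E₀ : ℂ) * ⟪v, v⟫_ℂ
        = ⟪w, H w⟫_ℂ - (E₀ : ℂ) * ⟪w, w⟫_ℂ := by
      have hBv : ∀ x : V, ⟪ψ₀, H x⟫_ℂ = (E₀ : ℂ) * ⟪ψ₀, x⟫_ℂ := fun x => by
        rw [← hHs ψ₀ x, heig, inner_smul_left, Complex.conj_ofReal]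
      have hBv' : ∀ x : V, ⟪x, H ψ₀⟫_ℂ = (E₀ : ℂ) * ⟪x, ψ₀⟫_ℂ := fun x => by
        rw [heig, inner_smul_right]
      simp only [hw, inner_sub_left, inner_sub_right, map_sub, map_smul, inner_smul_left,
        inner_smul_right, hBv, hBv', hψn, hcreal]
      ring
    rw [hkey]
    have hwn : ⟪w, w⟫_ℂ = (‖w‖ : ℂ) ^ 2 := by
      rw [inner_self_eq_norm_sq_to_K]; norm_num
    -- gap bound: Δ * ‖w‖^2 ≤ (⟪w, H w⟫).re - E₀ * ‖w‖^2
    have hgapw : (E₀ + Δ) * ‖w‖ ^ 2 ≤ (⟪w, H w⟫_ℂ).re := by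
      rcases eq_or_ne w 0 with h0 | h0
      · simp [h0]
      · have hn : ‖w‖ ≠ 0 := norm_ne_zero_iff.mpr h0
        have hφ : ‖(‖w‖⁻¹ : ℂ) • w‖ = 1 := by
          rw [norm_smul]; simp [hn]
        have horth : ⟪ψ₀, (‖w‖⁻¹ : ℂ) • w⟫_ℂ = 0 := by
          rw [inner_smul_right, hworth, mul_zero]
        have := hgap _ hφ horth
        rw [map_smul, inner_smul_left, inner_smul_right] at this
        have hconj : (starRingEnd ℂ) ((‖w‖ : ℂ)⁻¹) = (‖w‖ : ℂ)⁻¹ := by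
          rw [← Complex.ofReal_inv, Complex.conj_ofReal]
        rw [hconj, ← mul_assoc, ← Complex.ofReal_inv, ← Complex.ofReal_mul] at this
        rw [Complex.re_ofReal_mul] at this
        have h2 : E₀ + Δ ≤ (‖w‖⁻¹ * ‖w‖⁻¹) * (⟪w, H w⟫_ℂ).re := this
        have h3 : (E₀ + Δ) * ‖w‖ ^ 2 ≤ ((‖w‖⁻¹ * ‖w‖⁻¹) * (⟪w, H w⟫_ℂ).re) * ‖w‖ ^ 2 :=
          mul_le_mul_of_nonneg_right h2 (sq_nonneg _)
        have h4 : ((‖w‖⁻¹ * ‖w‖⁻¹) * (⟪w, H w⟫_ℂ).re) * ‖w‖ ^ 2 = (⟪w, H w⟫_ℂ).re := by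
          rw [pow_two]
          field_simp
        linarith [h3, h4.symm.le, h4.le]
    -- norms relation: ⟪ψ₀,(A*A)ψ₀⟫.re = ‖v‖² and ‖w‖² = ‖v‖² - c.re²
    have hAAv : ⟪ψ₀, (A * A) ψ₀⟫_ℂ = ⟪v, v⟫_ℂ := by
      simp only [ContinuousLinearMap.mul_apply]
      rw [← hAs ψ₀ (A ψ₀)]
    have hcim : c.im = 0 := by
      have h := congrArg Complex.im hcreal
      simp only [Complex.conj_im] at h
      linarith
    have hwv : ‖w‖ ^ 2 = (⟪v, v⟫_ℂ).re - c.re ^ 2 := by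
      have : ⟪w, w⟫_ℂ = ⟪v, v⟫_ℂ - c * c := by
        simp only [hw, inner_sub_left, inner_sub_right, inner_smul_left, inner_smul_right,
          hψn, hcreal, ← hc, ← inner_conj_symm v ψ₀, hcreal]
        ring
      have h2 : ((‖w‖ : ℂ) ^ 2).re = (⟪v, v⟫_ℂ - c * c).re := by rw [← hwn, this]
      rw [Complex.sub_re, Complex.mul_re, hcim] at h2
      simpa [pow_two] using h2
    rw [hAAv]
    rw [Complex.sub_re, Complex.mul_re, Complex.ofReal_re, Complex.ofReal_im]
    have hwre : (⟪w, w⟫_ℂ).re = ‖w‖ ^ 2 := by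
      rw [hwn, ← Complex.ofReal_pow]; exact Complex.ofReal_re _
    rw [hwre]
    nlinarith [hgapw, hwv]
end

section
/- Let f : ℝ^M → ℝ be twice continuously differentiable, let θ* satisfy ∇f(θ*) = 0 and ∇²f(θ*) ⪰ 2μ I for some μ > 0, and suppose the Hessian is L_H-Lipschitz: ‖∇²f(θ) − ∇²f(θ')‖_op ≤ L_H ‖θ − θ'‖₂ for all θ, θ'. Then for every θ with ‖θ − θ*‖₂ ≤ μ / L_H, the Polyak–Łojasiewicz inequality holds: (1/2) ‖∇f(θ)‖₂² ≥ μ ( f(θ) − f(θ*) ). -/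
open Matrix

set_option maxHeartbeats 1000000 in
/-- Local Polyak–Łojasiewicz inequality: if `f` is C², `θ*` is a
critical point with Hessian `⪰ 2μI` (`μ > 0`), and the Hessian is `L_H`-Lipschitz in
operator norm, then for every `θ` with `‖θ − θ*‖ ≤ μ/L_H` the PŁ inequality
`(1/2)‖∇f(θ)‖² ≥ μ(f(θ) − f(θ*))` holds. -/
theorem local_polyak_lojasiewicz
    {M : ℕ} (f : EuclideanSpace ℝ (Fin M) → ℝ) (μ LH : ℝ)
    (hμ : 0 < μ) (hLH : 0 < LH)
    (hf : ContDiff ℝ 2 f)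
    (θstar : EuclideanSpace ℝ (Fin M))
    (hcrit : gradient f θstar = 0)
    (hhess : ∀ v : EuclideanSpace ℝ (Fin M),
      2 * μ * ‖v‖ ^ 2 ≤ iteratedFDeriv ℝ 2 f θstar ![v, v])
    (hlip : ∀ θ θ' : EuclideanSpace ℝ (Fin M),
      ‖iteratedFDeriv ℝ 2 f θ - iteratedFDeriv ℝ 2 f θ'‖ ≤ LH * ‖θ - θ'‖) :
    ∀ θ : EuclideanSpace ℝ (Fin M), ‖θ - θstar‖ ≤ μ / LH →
      μ * (f θ - f θstar) ≤ (1 / 2) * ‖gradient f θ‖ ^ 2 := by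
  intro θ hθ
  set v : EuclideanSpace ℝ (Fin M) := θstar - θ with hv
  set γ : ℝ → EuclideanSpace ℝ (Fin M) := fun t => θ + t • v with hγdef
  have hγ : ∀ t : ℝ, HasDerivAt γ v t := by
    intro t
    have := ((hasDerivAt_id t).smul_const v).const_add θ
    simp only [id_eq, one_smul] at this
    exact this
  have hfd : Differentiable ℝ f := hf.differentiable (by norm_num)
  have hfd' : ContDiff ℝ 1 (fderiv ℝ f) := hf.fderiv_right (by norm_num)
  set h : ℝ → ℝ := fun t => f (γ t) with hhdef
  set h1 : ℝ → ℝ := fun t => fderiv ℝ f (γ t) v with hh1def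
  have hd1 : ∀ t : ℝ, HasDerivAt h (h1 t) t := fun t =>
    (hfd (γ t)).hasFDerivAt.comp_hasDerivAt t (hγ t)
  have hd2 : ∀ t : ℝ, HasDerivAt h1 (iteratedFDeriv ℝ 2 f (γ t) ![v, v]) t := by
    intro t
    have h2 : HasFDerivAt (fun y : EuclideanSpace ℝ (Fin M) => fderiv ℝ f y v)
        ((ContinuousLinearMap.apply ℝ ℝ v).comp (fderiv ℝ (fderiv ℝ f) (γ t))) (γ t) :=
      (ContinuousLinearMap.apply ℝ ℝ v).hasFDerivAt.comp (γ t)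
        (hfd'.differentiable one_ne_zero (γ t)).hasFDerivAt
    have := h2.comp_hasDerivAt t (hγ t)
    rw [iteratedFDeriv_two_apply]
    exact this
  have hvle : ‖v‖ ≤ μ / LH := by rw [hv, norm_sub_rev]; exact hθ
  -- Hessian lower bound along the segment
  have hquad : ∀ t : ℝ, t ∈ Set.Icc (0:ℝ) 1 →
      μ * ‖v‖ ^ 2 ≤ iteratedFDeriv ℝ 2 f (γ t) ![v, v] := by
    intro t ht
    have hdist : ‖γ t - θstar‖ ≤ μ / LH := by
      have heq : γ t - θstar = (t - 1) • v := by
        simp only [hγdef, hv]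
        module
      rw [heq, norm_smul]
      have h1 : ‖(t - 1 : ℝ)‖ ≤ 1 := by
        rw [Real.norm_eq_abs, abs_le]
        exact ⟨by linarith [ht.1], by linarith [ht.2]⟩
      calc ‖(t-1 : ℝ)‖ * ‖v‖ ≤ 1 * ‖v‖ :=
            mul_le_mul_of_nonneg_right h1 (norm_nonneg v)
        _ ≤ μ / LH := by simpa using hvle
    have hperturb : |iteratedFDeriv ℝ 2 f (γ t) ![v, v] - iteratedFDeriv ℝ 2 f θstar ![v, v]|
        ≤ μ * ‖v‖ ^ 2 := by
      have h1 : iteratedFDeriv ℝ 2 f (γ t) ![v, v] - iteratedFDeriv ℝ 2 f θstar ![v, v]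
          = (iteratedFDeriv ℝ 2 f (γ t) - iteratedFDeriv ℝ 2 f θstar) ![v, v] := by
        simp
      have h2 := (iteratedFDeriv ℝ 2 f (γ t) - iteratedFDeriv ℝ 2 f θstar).le_opNorm ![v, v]
      have h3 : ∏ i : Fin 2, ‖(![v, v]) i‖ = ‖v‖ ^ 2 := by
        simp [Fin.prod_univ_two, sq]
      rw [Real.norm_eq_abs, h3] at h2
      have hnn : (0:ℝ) ≤ ‖v‖ ^ 2 := by positivity
      rw [h1]
      calc |(iteratedFDeriv ℝ 2 f (γ t) - iteratedFDeriv ℝ 2 f θstar) ![v, v]|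
          ≤ ‖iteratedFDeriv ℝ 2 f (γ t) - iteratedFDeriv ℝ 2 f θstar‖ * ‖v‖ ^ 2 := h2
        _ ≤ (LH * ‖γ t - θstar‖) * ‖v‖ ^ 2 :=
            mul_le_mul_of_nonneg_right (hlip _ _) hnn
        _ ≤ (LH * (μ / LH)) * ‖v‖ ^ 2 :=
            mul_le_mul_of_nonneg_right
              (mul_le_mul_of_nonneg_left hdist hLH.le) hnn
        _ = μ * ‖v‖ ^ 2 := by field_simp
    have hh := hhess v
    have habs := abs_le.mp hperturb
    linarith [habs.1]
  set c : ℝ := μ * ‖v‖ ^ 2 with hc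
  -- step 1: h1 t - c t monotone on [0,1]
  have hd3 : ∀ t : ℝ, HasDerivAt (fun s => h1 s - c * s)
      (iteratedFDeriv ℝ 2 f (γ t) ![v, v] - c) t := by
    intro t
    exact ((hd2 t).sub ((hasDerivAt_id t).const_mul c)).congr_deriv (by ring)
  have hmono1 : MonotoneOn (fun t => h1 t - c * t) (Set.Icc (0:ℝ) 1) := by
    apply monotoneOn_of_deriv_nonneg (convex_Icc 0 1)
    · exact fun t _ => ((hd3 t).continuousAt).continuousWithinAt
    · intro t _
      exact ((hd3 t).differentiableAt).differentiableWithinAt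
    · intro t ht
      rw [interior_Icc] at ht
      rw [(hd3 t).deriv]
      have := hquad t ⟨ht.1.le, ht.2.le⟩
      simp only [hc]
      linarith
  have hstep1 : ∀ t ∈ Set.Icc (0:ℝ) 1, h1 0 + c * t ≤ h1 t := by
    intro t ht
    have := hmono1 (Set.left_mem_Icc.mpr zero_le_one) ht ht.1
    simp only [mul_zero, sub_zero] at this
    linarith
  -- step 2: h t - h1 0 * t - c/2 t² monotone
  have hd4 : ∀ t : ℝ, HasDerivAt (fun s => h s - h1 0 * s - c / 2 * s ^ 2)
      (h1 t - h1 0 - c * t) t := by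
    intro t
    have := ((hd1 t).sub ((hasDerivAt_id t).const_mul (h1 0))).sub
      (((hasDerivAt_pow 2 t)).const_mul (c / 2))
    refine this.congr_deriv ?_
    push_cast
    ring
  have hmono2 : MonotoneOn (fun s => h s - h1 0 * s - c / 2 * s ^ 2) (Set.Icc (0:ℝ) 1) := by
    apply monotoneOn_of_deriv_nonneg (convex_Icc 0 1)
    · exact fun t _ => ((hd4 t).continuousAt).continuousWithinAt
    · intro t _
      exact ((hd4 t).differentiableAt).differentiableWithinAt
    · intro t ht
      rw [interior_Icc] at ht
      rw [(hd4 t).deriv]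
      have := hstep1 t ⟨ht.1.le, ht.2.le⟩
      linarith
  have hkey : h 0 + h1 0 + c / 2 ≤ h 1 := by
    have := hmono2 (Set.left_mem_Icc.mpr zero_le_one) (Set.right_mem_Icc.mpr zero_le_one)
      zero_le_one
    simp only [mul_zero, sub_zero, mul_one, one_pow] at this
    linarith
  -- interpret endpoints
  have hγ0 : γ 0 = θ := by simp [hγdef]
  have hγ1 : γ 1 = θstar := by simp [hγdef, hv]
  have hh0 : h 0 = f θ := by rw [hhdef]; simp [hγ0]
  have hh1 : h 1 = f θstar := by rw [hhdef]; simp [hγ1]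
  have hgrad : h1 0 = inner ℝ (gradient f θ) v := by
    rw [hh1def]
    simp only [hγ0]
    have : fderiv ℝ f θ = InnerProductSpace.toDual ℝ _ (gradient f θ) :=
      ((InnerProductSpace.toDual ℝ _).apply_symm_apply _).symm
    rw [this]
    rfl
  have hinner : -(‖gradient f θ‖ * ‖v‖) ≤ (inner ℝ (gradient f θ) v : ℝ) := by
    have := abs_real_inner_le_norm (gradient f θ) v
    have := abs_le.mp this
    linarith [this.1]
  have hmain : f θ - f θstar ≤ ‖gradient f θ‖ * ‖v‖ - μ * ‖v‖ ^ 2 / 2 := by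
    rw [← hh0, ← hh1]
    have : -(h1 0) ≤ ‖gradient f θ‖ * ‖v‖ := by rw [hgrad]; linarith
    simp only [hc] at hkey
    linarith
  nlinarith [sq_nonneg (‖gradient f θ‖ - μ * ‖v‖), norm_nonneg v, norm_nonneg (gradient f θ),
    mul_le_mul_of_nonneg_left hmain hμ.le, sq_nonneg ‖v‖]
end

section
/- Let E : ℝ^M × [0,1] → ℝ be twice continuously differentiable and let θ* : [0,1] → ℝ^M be a differentiable curve of critical points, i.e., ∇_θ E(θ*(λ), λ) = 0 for all λ ∈ [0,1]. Assume that for all λ the Hessian satisfies ∇²_θ E(θ*(λ), λ) ⪰ 2μ I with μ > 0, and that each mixed partial derivative is bounded: |∂_{θ_k} ∂_λ E(θ*(λ), λ)| ≤ 2c for all k = 1,…,M and all λ. Then ‖ (d/dλ) θ*(λ) ‖₂ ≤ √M · c / μ for all λ, and consequently ‖θ*(λ + δλ) − θ*(λ)‖₂ ≤ (√M · c / μ) δλ for all admissible δλ ≥ 0. -/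
open Set InnerProductSpace

set_option maxHeartbeats 1000000

lemma drift_aux
    {M : ℕ} (E : EuclideanSpace ℝ (Fin M) → ℝ → ℝ) (μ c : ℝ) (hμ : 0 < μ)
    (hE : ContDiff ℝ 2 (fun p : EuclideanSpace ℝ (Fin M) × ℝ => E p.1 p.2))
    (θstar : ℝ → EuclideanSpace ℝ (Fin M))
    (hdiff : ∀ l ∈ Set.Icc (0 : ℝ) 1, DifferentiableAt ℝ θstar l)
    (hcrit : ∀ l ∈ Set.Icc (0 : ℝ) 1, gradient (fun θ => E θ l) (θstar l) = 0)
    (hhess : ∀ l ∈ Set.Icc (0 : ℝ) 1, ∀ v : EuclideanSpace ℝ (Fin M),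
      2 * μ * ‖v‖ ^ 2 ≤ iteratedFDeriv ℝ 2 (fun θ => E θ l) (θstar l) ![v, v])
    (hmix : ∀ l ∈ Set.Icc (0 : ℝ) 1, ∀ k : Fin M,
      |gradient (fun θ => deriv (fun s => E θ s) l) (θstar l) k| ≤ 2 * c)
    (l : ℝ) (hl : l ∈ Set.Icc (0 : ℝ) 1) :
    ‖deriv θstar l‖ ≤ Real.sqrt M * c / μ := by
  classical
  have hc0 : 0 ≤ Real.sqrt M * c := by
    rcases Nat.eq_zero_or_pos M with hM | hM
    · simp [hM]
    · have h1 := hmix l hl ⟨0, hM⟩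
      have h2 : 0 ≤ 2 * c := le_trans (abs_nonneg _) h1
      have : 0 ≤ c := by linarith
      exact mul_nonneg (Real.sqrt_nonneg _) this
  set F : EuclideanSpace ℝ (Fin M) × ℝ → ℝ := fun p => E p.1 p.2 with hFdef
  have hF1 : Differentiable ℝ F := hE.differentiable (by norm_num)
  have hFd1 : ContDiff ℝ 1 (fderiv ℝ F) := hE.fderiv_right (by norm_num)
  set q : EuclideanSpace ℝ (Fin M) × ℝ := (θstar l, l) with hqdef
  set B := fderiv ℝ (fderiv ℝ F) q with hBdef
  have hB : HasFDerivAt (fderiv ℝ F) B q := (hFd1.differentiable one_ne_zero q).hasFDerivAt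
  have hsym : ∀ a b, B a b = B b a := fun a b =>
    second_derivative_symmetric (fun y => (hF1 y).hasFDerivAt) hB a b
  set w := deriv θstar l with hwdef
  set inlθ : EuclideanSpace ℝ (Fin M) →L[ℝ] EuclideanSpace ℝ (Fin M) × ℝ :=
    (ContinuousLinearMap.id ℝ _).prod 0 with hinl
  have hinl_apply : ∀ v : EuclideanSpace ℝ (Fin M), inlθ v = (v, (0:ℝ)) := fun v => by
    simp [hinl]
  have hj : ∀ (θ : EuclideanSpace ℝ (Fin M)) (l' : ℝ),
      HasFDerivAt (fun θ' : EuclideanSpace ℝ (Fin M) => (θ', l')) inlθ θ := fun θ l' =>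
    HasFDerivAt.prodMk (hasFDerivAt_id θ) (hasFDerivAt_const l' θ)
  have hA : ∀ (θ : EuclideanSpace ℝ (Fin M)) (l' : ℝ),
      HasFDerivAt (fun x => E x l') ((fderiv ℝ F (θ, l')).comp inlθ) θ := fun θ l' => by
    simpa [Function.comp_def] using ((hF1 (θ, l')).hasFDerivAt.comp θ (hj θ l'))
  have hApar : ∀ l' ∈ Set.Icc (0:ℝ) 1, ∀ v : EuclideanSpace ℝ (Fin M),
      fderiv ℝ F (θstar l', l') (v, (0:ℝ)) = 0 := by
    intro l' hl' v
    have h0 : fderiv ℝ (fun x => E x l') (θstar l') = 0 := by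
      have h := hcrit l' hl'
      simp only [gradient] at h
      exact (LinearIsometryEquiv.map_eq_zero_iff _).mp h
    have h1 := (hA (θstar l') l').fderiv
    have h2 : ((fderiv ℝ F (θstar l', l')).comp inlθ) v = 0 := by
      rw [← h1, h0]; rfl
    simpa [hinl_apply] using h2
  -- mixed partials
  have hg : ∀ θ : EuclideanSpace ℝ (Fin M),
      deriv (fun s => E θ s) l = fderiv ℝ F (θ, l) ((0:EuclideanSpace ℝ (Fin M)), (1:ℝ)) := by
    intro θ
    have h1 : HasDerivAt (fun s : ℝ => (θ, s)) ((0:EuclideanSpace ℝ (Fin M)), (1:ℝ)) l :=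
      HasDerivAt.prodMk (hasDerivAt_const l θ) (hasDerivAt_id l)
    have h2 := (hF1 (θ, l)).hasFDerivAt.comp_hasDerivAt l h1
    simpa [Function.comp_def] using h2.deriv
  have hgF : HasFDerivAt (fun θ : EuclideanSpace ℝ (Fin M) => deriv (fun s => E θ s) l)
      ((fderiv ℝ F q).comp (0 : EuclideanSpace ℝ (Fin M) →L[ℝ] EuclideanSpace ℝ (Fin M) × ℝ) +
        (B.comp inlθ).flip ((0:EuclideanSpace ℝ (Fin M)), (1:ℝ))) (θstar l) := by
    have hc : HasFDerivAt (fun θ : EuclideanSpace ℝ (Fin M) => fderiv ℝ F (θ, l))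
        (B.comp inlθ) (θstar l) := by
      simpa [Function.comp_def] using hB.comp (θstar l) (hj (θstar l) l)
    have hu : HasFDerivAt (fun _ : EuclideanSpace ℝ (Fin M) =>
        ((0:EuclideanSpace ℝ (Fin M)), (1:ℝ)))
        (0 : EuclideanSpace ℝ (Fin M) →L[ℝ] EuclideanSpace ℝ (Fin M) × ℝ) (θstar l) :=
      hasFDerivAt_const _ _
    have h3 := hc.clm_apply hu
    have h4 : (fun θ : EuclideanSpace ℝ (Fin M) => deriv (fun s => E θ s) l)
        = fun θ => fderiv ℝ F (θ, l) ((0:EuclideanSpace ℝ (Fin M)), (1:ℝ)) := funext hg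
    rw [h4]
    exact h3
  set m := gradient (fun θ => deriv (fun s => E θ s) l) (θstar l) with hmdef
  have hm_inner : ∀ v : EuclideanSpace ℝ (Fin M),
      (inner ℝ m v : ℝ) = B (v, (0:ℝ)) ((0:EuclideanSpace ℝ (Fin M)), (1:ℝ)) := by
    intro v
    have h1 : (inner ℝ m v : ℝ)
        = fderiv ℝ (fun θ => deriv (fun s => E θ s) l) (θstar l) v := by
      rw [hmdef]
      simp only [gradient]
      exact InnerProductSpace.toDual_symm_apply
    rw [h1, hgF.fderiv]
    simp [hinl_apply]
  -- key equation
  have hw1 : HasDerivAt (fun l' => (θstar l', l')) (w, (1:ℝ)) l :=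
    HasDerivAt.prodMk ((hdiff l hl).hasDerivAt) (hasDerivAt_id l)
  have hφ : HasDerivAt
      (fun l' => fderiv ℝ F (θstar l', l') ((w, (0:ℝ))))
      (((fderiv ℝ F q).comp (0 : EuclideanSpace ℝ (Fin M) × ℝ →L[ℝ] EuclideanSpace ℝ (Fin M) × ℝ) + B.flip (w, (0:ℝ))) (w, (1:ℝ))) l := by
    have hcq : HasFDerivAt
        (fun p : EuclideanSpace ℝ (Fin M) × ℝ => fderiv ℝ F p ((w, (0:ℝ))))
        ((fderiv ℝ F q).comp (0 : EuclideanSpace ℝ (Fin M) × ℝ →L[ℝ] EuclideanSpace ℝ (Fin M) × ℝ) + B.flip (w, (0:ℝ))) q :=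
      hB.clm_apply (hasFDerivAt_const _ _)
    have hres := HasFDerivAt.comp_hasDerivAt (f := fun l' => (θstar l', l')) l hcq hw1
    exact hres
  have hkey : B (w, (1:ℝ)) (w, (0:ℝ)) = 0 := by
    have hU : UniqueDiffWithinAt ℝ (Set.Icc (0:ℝ) 1) l := (uniqueDiffOn_Icc one_pos) l hl
    have h1 : derivWithin (fun l' => fderiv ℝ F (θstar l', l') ((w, (0:ℝ)))) (Set.Icc 0 1) l
        = ((fderiv ℝ F q).comp (0 : EuclideanSpace ℝ (Fin M) × ℝ →L[ℝ] EuclideanSpace ℝ (Fin M) × ℝ) + B.flip (w, (0:ℝ))) (w, (1:ℝ)) :=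
      (hφ.hasDerivWithinAt).derivWithin hU
    have h2 : derivWithin (fun l' => fderiv ℝ F (θstar l', l') ((w, (0:ℝ)))) (Set.Icc 0 1) l
        = 0 := by
      rw [derivWithin_congr (fun x hx => hApar x hx w) (hApar l hl w)]
      exact (hasDerivWithinAt_const _ _ _).derivWithin hU
    have h3 := h1.symm.trans h2
    simpa using h3
  -- Hessian identity
  have hcompR : ∀ T : EuclideanSpace ℝ (Fin M) × ℝ →L[ℝ] ℝ,
      ((ContinuousLinearMap.compL ℝ (EuclideanSpace ℝ (Fin M))
        (EuclideanSpace ℝ (Fin M) × ℝ) ℝ).flip inlθ) T = T.comp inlθ := fun T => rfl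
  have hhessId : ∀ v : EuclideanSpace ℝ (Fin M),
      iteratedFDeriv ℝ 2 (fun x => E x l) (θstar l) ![v, v] = B (v, (0:ℝ)) (v, (0:ℝ)) := by
    intro v
    set compR := (ContinuousLinearMap.compL ℝ (EuclideanSpace ℝ (Fin M))
        (EuclideanSpace ℝ (Fin M) × ℝ) ℝ).flip inlθ with hcR
    rw [iteratedFDeriv_two_apply]
    have hf1 : (fderiv ℝ (fun x => E x l))
        = fun θ => compR (fderiv ℝ F (θ, l)) := by
      funext θ
      rw [(hA θ l).fderiv, hcompR]
    have hinner : HasFDerivAt (fun θ : EuclideanSpace ℝ (Fin M) => fderiv ℝ F (θ, l))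
        (B.comp inlθ) (θstar l) := by
      simpa [Function.comp_def] using hB.comp (θstar l) (hj (θstar l) l)
    have h2 : HasFDerivAt (fun θ : EuclideanSpace ℝ (Fin M) => compR (fderiv ℝ F (θ, l)))
        (compR.comp (B.comp inlθ)) (θstar l) := by
      simpa [Function.comp_def] using compR.hasFDerivAt.comp (θstar l) hinner
    rw [hf1, h2.fderiv]
    simp [hcompR, hinl_apply]
  -- assemble inequality
  have h0 := hhess l hl w
  rw [hhessId w] at h0
  have hsplit : B ((w, (0:ℝ))) ((w, (0:ℝ)))
      + B ((0:EuclideanSpace ℝ (Fin M)), (1:ℝ)) ((w, (0:ℝ))) = 0 := by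
    have he : ((w, (1:ℝ)) : EuclideanSpace ℝ (Fin M) × ℝ)
        = (w, (0:ℝ)) + ((0:EuclideanSpace ℝ (Fin M)), (1:ℝ)) := by simp
    rw [he, map_add, ContinuousLinearMap.add_apply] at hkey
    exact hkey
  have hmixedterm : B ((0:EuclideanSpace ℝ (Fin M)), (1:ℝ)) ((w, (0:ℝ))) = (inner ℝ m w : ℝ) := by
    rw [hsym]; exact (hm_inner w).symm
  have habs : |(inner ℝ m w : ℝ)| ≤ ‖m‖ * ‖w‖ := abs_real_inner_le_norm m w
  have hnormm : ‖m‖ ≤ 2 * (Real.sqrt M * c) := by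
    rcases Nat.eq_zero_or_pos M with hM | hM
    · subst hM
      have hm0 : m = 0 := Subsingleton.elim _ _
      simp [hm0]
    · have hcpos : 0 ≤ 2 * c := le_trans (abs_nonneg _) (hmix l hl ⟨0, hM⟩)
      have h1 : ‖m‖ ^ 2 ≤ (M : ℝ) * (2 * c) ^ 2 := by
        rw [EuclideanSpace.norm_eq, Real.sq_sqrt (by positivity)]
        calc (∑ k, ‖m k‖ ^ 2) ≤ ∑ _k : Fin M, (2 * c) ^ 2 := by
              refine Finset.sum_le_sum fun k _ => ?_
              rw [Real.norm_eq_abs]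
              exact pow_le_pow_left₀ (abs_nonneg _) (hmix l hl k) 2
          _ = (M : ℝ) * (2 * c) ^ 2 := by
              simp [Finset.sum_const, Finset.card_univ]
      have h2 : ‖m‖ ≤ Real.sqrt ((M : ℝ) * (2 * c) ^ 2) := by
        rw [← Real.sqrt_sq (norm_nonneg m)]
        exact Real.sqrt_le_sqrt h1
      have h3 : Real.sqrt ((M : ℝ) * (2 * c) ^ 2) = Real.sqrt M * (2 * c) := by
        rw [Real.sqrt_mul (Nat.cast_nonneg M), Real.sqrt_sq hcpos]
      rw [h3] at h2
      linarith [h2]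
  have h5 : B ((w, (0:ℝ))) ((w, (0:ℝ))) ≤ ‖m‖ * ‖w‖ := by
    have he : B ((w, (0:ℝ))) ((w, (0:ℝ))) = -(inner ℝ m w : ℝ) := by
      rw [← hmixedterm]; linarith [hsplit]
    rw [he]
    exact le_trans (neg_le_abs _) habs
  have h6 : ‖m‖ * ‖w‖ ≤ 2 * (Real.sqrt M * c) * ‖w‖ :=
    mul_le_mul_of_nonneg_right hnormm (norm_nonneg w)
  have hineq : 2 * μ * ‖w‖ ^ 2 ≤ 2 * (Real.sqrt M * c) * ‖w‖ := by linarith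
  rcases eq_or_lt_of_le (norm_nonneg w) with hz | hz
  · rw [← hz]
    exact div_nonneg hc0 hμ.le
  · rw [le_div_iff₀ hμ]
    nlinarith [hineq, hz]


/-- Drift bound for a curve of critical points: if
`∇_θ E(θ*(λ), λ) = 0` on `[0,1]`, the Hessian at `θ*(λ)` satisfies `⪰ 2μI` with
`μ > 0`, and each mixed partial `∂_{θ_k}∂_λ E(θ*(λ), λ)` is bounded by `2c`,
then `‖(d/dλ)θ*(λ)‖ ≤ √M · c/μ`, and consequently
`‖θ*(λ+δλ) − θ*(λ)‖ ≤ (√M · c/μ) δλ` for admissible `δλ ≥ 0`. -/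
theorem minimizer_drift_bound
    {M : ℕ} (E : EuclideanSpace ℝ (Fin M) → ℝ → ℝ) (μ c : ℝ) (hμ : 0 < μ)
    (hE : ContDiff ℝ 2 (fun p : EuclideanSpace ℝ (Fin M) × ℝ => E p.1 p.2))
    (θstar : ℝ → EuclideanSpace ℝ (Fin M))
    (hdiff : ∀ l ∈ Set.Icc (0 : ℝ) 1, DifferentiableAt ℝ θstar l)
    (hcrit : ∀ l ∈ Set.Icc (0 : ℝ) 1, gradient (fun θ => E θ l) (θstar l) = 0)
    (hhess : ∀ l ∈ Set.Icc (0 : ℝ) 1, ∀ v : EuclideanSpace ℝ (Fin M),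
      2 * μ * ‖v‖ ^ 2 ≤ iteratedFDeriv ℝ 2 (fun θ => E θ l) (θstar l) ![v, v])
    (hmix : ∀ l ∈ Set.Icc (0 : ℝ) 1, ∀ k : Fin M,
      |gradient (fun θ => deriv (fun s => E θ s) l) (θstar l) k| ≤ 2 * c) :
    (∀ l ∈ Set.Icc (0 : ℝ) 1, ‖deriv θstar l‖ ≤ Real.sqrt M * c / μ) ∧
    (∀ l dl : ℝ, 0 ≤ dl → l ∈ Set.Icc (0 : ℝ) 1 → l + dl ∈ Set.Icc (0 : ℝ) 1 →
      ‖θstar (l + dl) - θstar l‖ ≤ Real.sqrt M * c / μ * dl) := by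
  have key : ∀ l ∈ Set.Icc (0 : ℝ) 1, ‖deriv θstar l‖ ≤ Real.sqrt M * c / μ := fun l hl =>
    drift_aux E μ c hμ hE θstar hdiff hcrit hhess hmix l hl
  refine ⟨key, ?_⟩
  intro l dl hdl hl hldl
  have h := (convex_Icc (0:ℝ) 1).norm_image_sub_le_of_norm_hasDerivWithin_le
    (f := θstar) (f' := deriv θstar)
    (fun x hx => (hdiff x hx).hasDerivAt.hasDerivWithinAt) key hl hldl
  have he : ‖l + dl - l‖ = dl := by
    rw [add_sub_cancel_left, Real.norm_eq_abs, abs_of_nonneg hdl]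
  rw [he] at h
  exact h
end

section
/- Let f : ℝ^M → ℝ be differentiable with L-Lipschitz gradient (L > 0), let f* be a real number with f(θ) ≥ f* for all θ, and suppose the Polyak–Łojasiewicz inequality (1/2)‖∇f(θ)‖₂² ≥ μ (f(θ) − f*) holds at a point θ, where 0 < μ ≤ L. Then the gradient descent step θ' = θ − (1/L) ∇f(θ) satisfies f(θ') − f* ≤ (1 − μ/L) ( f(θ) − f* ). Consequently, if the PŁ inequality holds at every iterate of gradient descent with step size 1/L started from θ⁰, then f(θ^k) − f* ≤ (1 − μ/L)^k ( f(θ⁰) − f* ) for all k ≥ 0. -/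
open Set

lemma descent_lemma {E : Type*} [NormedAddCommGroup E] [InnerProductSpace ℝ E] [CompleteSpace E]
    (f : E → ℝ) (L : ℝ) (hL : 0 < L) (hdiff : Differentiable ℝ f)
    (hsmooth : ∀ x y : E, ‖gradient f x - gradient f y‖ ≤ L * ‖x - y‖)
    (x v : E) :
    f (x + v) ≤ f x + (inner ℝ (gradient f x) v : ℝ) + L / 2 * ‖v‖ ^ 2 := by
  set g := gradient f with hg
  have hderiv : ∀ t : ℝ, HasDerivAt (fun t : ℝ => f (x + t • v))
      ((inner ℝ (g (x + t • v)) v : ℝ)) t := by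
    intro t
    have hγ : HasDerivAt (fun t : ℝ => x + t • v) v t := by
      simpa using ((hasDerivAt_id t).smul_const v).const_add x
    have hf := ((hdiff (x + t • v)).hasFDerivAt).comp_hasDerivAt t hγ
    have : fderiv ℝ f (x + t • v) v = (inner ℝ (g (x + t • v)) v : ℝ) := by
      rw [hg]
      exact (InnerProductSpace.toDual_symm_apply (E := E) (𝕜 := ℝ)).symm
    rwa [this] at hf
  set φ : ℝ → ℝ := fun t => f (x + t • v) - t * (inner ℝ (g x) v : ℝ) - L / 2 * t ^ 2 * ‖v‖ ^ 2
    with hφdef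
  have hφ : ∀ t : ℝ, HasDerivAt φ
      ((inner ℝ (g (x + t • v)) v : ℝ) - (inner ℝ (g x) v : ℝ) - L * t * ‖v‖ ^ 2) t := by
    intro t
    have h1 : HasDerivAt (fun t : ℝ => t * (inner ℝ (g x) v : ℝ)) (inner ℝ (g x) v : ℝ) t := by
      simpa using (hasDerivAt_id t).mul_const (inner ℝ (g x) v : ℝ)
    have h2 : HasDerivAt (fun t : ℝ => L / 2 * t ^ 2 * ‖v‖ ^ 2) (L * t * ‖v‖ ^ 2) t := by
      have := ((hasDerivAt_pow 2 t).const_mul (L / 2)).mul_const (‖v‖ ^ 2)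
      refine this.congr_deriv ?_
      rw [show (2:ℕ) - 1 = 1 from rfl, pow_one]
      push_cast
      ring
    exact ((hderiv t).sub h1).sub h2
  have hanti : AntitoneOn φ (Icc (0 : ℝ) 1) := by
    apply antitoneOn_of_deriv_nonpos (convex_Icc 0 1)
    · exact (Differentiable.continuous fun t => (hφ t).differentiableAt).continuousOn
    · intro t _
      exact (hφ t).differentiableAt.differentiableWithinAt
    · intro t ht
      rw [interior_Icc] at ht
      rw [(hφ t).deriv]
      have hb : (inner ℝ (g (x + t • v)) v : ℝ) - (inner ℝ (g x) v : ℝ)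
          ≤ L * t * ‖v‖ ^ 2 := by
        have := real_inner_le_norm (g (x + t • v) - g x) v
        rw [inner_sub_left] at this
        have h2 := hsmooth (x + t • v) x
        have h3 : ‖x + t • v - x‖ = |t| * ‖v‖ := by
          simp [norm_smul]
        rw [h3, abs_of_pos ht.1] at h2
        nlinarith [norm_nonneg v, norm_nonneg (g (x + t • v) - g x), ht.1]
      linarith
  have h01 := hanti (left_mem_Icc.2 zero_le_one) (right_mem_Icc.2 zero_le_one) zero_le_one
  simp only [hφdef] at h01
  simp only [one_smul, zero_smul, add_zero, one_mul, zero_mul, sub_zero, one_pow, zero_pow,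
    mul_zero, mul_one] at h01
  linarith

/-- Linear convergence of gradient descent under the
Polyak–Łojasiewicz inequality: one step of gradient descent with step size `1/L`
contracts the energy error by `(1 − μ/L)`, and iterating yields geometric decay
`f(θ^k) − f* ≤ (1 − μ/L)^k (f(θ⁰) − f*)`. -/
theorem pl_gradient_descent_linear_convergence
    {M : ℕ} (f : EuclideanSpace ℝ (Fin M) → ℝ) (L μ fstar : ℝ)
    (hL : 0 < L) (hμ : 0 < μ) (hμL : μ ≤ L)
    (hdiff : Differentiable ℝ f)
    (hsmooth : ∀ x y : EuclideanSpace ℝ (Fin M),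
      ‖gradient f x - gradient f y‖ ≤ L * ‖x - y‖)
    (hlb : ∀ θ, fstar ≤ f θ) :
    (∀ θ : EuclideanSpace ℝ (Fin M),
      μ * (f θ - fstar) ≤ (1 / 2) * ‖gradient f θ‖ ^ 2 →
      f (θ - (1 / L) • gradient f θ) - fstar ≤ (1 - μ / L) * (f θ - fstar)) ∧
    (∀ θseq : ℕ → EuclideanSpace ℝ (Fin M),
      (∀ k, θseq (k + 1) = θseq k - (1 / L) • gradient f (θseq k)) →
      (∀ k, μ * (f (θseq k) - fstar) ≤ (1 / 2) * ‖gradient f (θseq k)‖ ^ 2) →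
      ∀ k, f (θseq k) - fstar ≤ (1 - μ / L) ^ k * (f (θseq 0) - fstar)) := by
  have step : ∀ θ : EuclideanSpace ℝ (Fin M),
      μ * (f θ - fstar) ≤ (1 / 2) * ‖gradient f θ‖ ^ 2 →
      f (θ - (1 / L) • gradient f θ) - fstar ≤ (1 - μ / L) * (f θ - fstar) := by
    intro θ hPL
    have h1 := descent_lemma f L hL hdiff hsmooth θ (-((1 / L) • gradient f θ))
    rw [← sub_eq_add_neg] at h1
    have hinner : (inner ℝ (gradient f θ) (-((1 / L) • gradient f θ)) : ℝ)
        = -(1 / L) * ‖gradient f θ‖ ^ 2 := by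
      rw [inner_neg_right, real_inner_smul_right, real_inner_self_eq_norm_sq]
      ring
    have hnorm : ‖-((1 / L) • gradient f θ)‖ ^ 2 = (1 / L) ^ 2 * ‖gradient f θ‖ ^ 2 := by
      rw [norm_neg, norm_smul]
      rw [Real.norm_eq_abs, abs_of_pos (by positivity)]
      ring
    rw [hinner, hnorm] at h1
    have hLne : L ≠ 0 := ne_of_gt hL
    have key : f (θ - (1 / L) • gradient f θ) ≤ f θ - (1 / (2 * L)) * ‖gradient f θ‖ ^ 2 := by
      have : -(1 / L) * ‖gradient f θ‖ ^ 2 + L / 2 * ((1 / L) ^ 2 * ‖gradient f θ‖ ^ 2)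
          = -(1 / (2 * L)) * ‖gradient f θ‖ ^ 2 := by
        field_simp
        ring
      linarith [h1, this.le, this.ge]
    have hmul : (1 / L) * (μ * (f θ - fstar)) ≤ (1 / L) * ((1 / 2) * ‖gradient f θ‖ ^ 2) :=
      mul_le_mul_of_nonneg_left hPL (by positivity)
    have hdiv : (1 - μ / L) * (f θ - fstar) = f θ - fstar - (1 / L) * (μ * (f θ - fstar)) := by
      field_simp
    rw [hdiv]
    have : (1 / L) * ((1 / 2) * ‖gradient f θ‖ ^ 2) = (1 / (2 * L)) * ‖gradient f θ‖ ^ 2 := by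
      ring
    linarith [key, hmul, this.le]
  refine ⟨step, ?_⟩
  intro θseq hrec hPL k
  induction k with
  | zero => simp
  | succ n ih =>
    have h1 : f (θseq (n + 1)) - fstar ≤ (1 - μ / L) * (f (θseq n) - fstar) := by
      rw [hrec n]
      exact step (θseq n) (hPL n)
    have hnn : 0 ≤ 1 - μ / L := by
      rw [sub_nonneg]
      exact div_le_one_of_le₀ hμL hL.le
    calc f (θseq (n + 1)) - fstar ≤ (1 - μ / L) * (f (θseq n) - fstar) := h1
      _ ≤ (1 - μ / L) * ((1 - μ / L) ^ n * (f (θseq 0) - fstar)) :=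
          mul_le_mul_of_nonneg_left ih hnn
      _ = (1 - μ / L) ^ (n + 1) * (f (θseq 0) - fstar) := by ring
end

section
/- Let (a_n)_{n≥0} be a sequence of nonnegative real numbers with a₀ = 0 satisfying the recursion a_{n+1} ≤ (1 − ηΔ) a_n + b + c a_n² for all n, where η, Δ, b, c > 0, ηΔ ≤ 1, and the discriminant condition η²Δ² ≥ 4bc holds. Then a_n ≤ A₋ for all n ≥ 0, where A₋ = 2b / ( ηΔ + √(η²Δ² − 4bc) ) is the smaller root of c a² − ηΔ a + b = 0; in particular a_n ≤ 2b / (ηΔ) for all n. -/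
/-- A nonnegative sequence with `a₀ = 0` satisfying the forced
contraction recursion `a_{n+1} ≤ (1 − ηΔ)aₙ + b + c aₙ²`, with `ηΔ ≤ 1` and
discriminant condition `η²Δ² ≥ 4bc`, stays below the smaller root
`A₋ = 2b / (ηΔ + √(η²Δ² − 4bc))`; in particular `aₙ ≤ 2b/(ηΔ)`. -/
theorem forced_contraction_recursion_bound
    (a : ℕ → ℝ) (η Δ b c : ℝ)
    (hη : 0 < η) (hΔ : 0 < Δ) (hb : 0 < b) (hc : 0 < c)
    (hηΔ : η * Δ ≤ 1) (hdisc : 4 * b * c ≤ η ^ 2 * Δ ^ 2)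
    (hnn : ∀ n, 0 ≤ a n) (ha0 : a 0 = 0)
    (hrec : ∀ n, a (n + 1) ≤ (1 - η * Δ) * a n + b + c * a n ^ 2) :
    (∀ n, a n ≤ 2 * b / (η * Δ + Real.sqrt (η ^ 2 * Δ ^ 2 - 4 * b * c))) ∧
    (∀ n, a n ≤ 2 * b / (η * Δ)) := by
  set t := η * Δ with ht
  have htpos : 0 < t := mul_pos hη hΔ
  set s := Real.sqrt (η ^ 2 * Δ ^ 2 - 4 * b * c) with hs
  have hsnn : 0 ≤ s := Real.sqrt_nonneg _
  have hs2 : s ^ 2 = t ^ 2 - 4 * b * c := by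
    rw [hs, Real.sq_sqrt (by nlinarith)]
    ring
  have hden : 0 < t + s := by linarith
  set A := 2 * b / (t + s) with hA
  have hApos : 0 < A := div_pos (by linarith) hden
  have hAeq : A * (t + s) = 2 * b := div_mul_cancel₀ _ hden.ne'
  clear_value t s A
  have hkey : (1 - t) * A + b + c * A ^ 2 = A := by
    have h2 : (t + s) ^ 2 ≠ 0 := pow_ne_zero _ hden.ne'
    have hkey' : ((1 - t) * A + b + c * A ^ 2) * (t + s) ^ 2 = A * (t + s) ^ 2 := by
      linear_combination b * hs2 + (c * (A * (t + s) + 2 * b) - t * (t + s)) * hAeq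
    exact mul_right_cancel₀ h2 hkey'
  have hmain : ∀ n, a n ≤ A := by
    intro n
    induction n with
    | zero => rw [ha0]; exact le_of_lt hApos
    | succ n ih =>
      have h1 : (1 - t) * a n ≤ (1 - t) * A :=
        mul_le_mul_of_nonneg_left ih (by linarith)
      have h2 : c * a n ^ 2 ≤ c * A ^ 2 :=
        mul_le_mul_of_nonneg_left (pow_le_pow_left₀ (hnn n) ih 2) hc.le
      calc a (n + 1) ≤ (1 - t) * a n + b + c * a n ^ 2 := hrec n
      _ ≤ (1 - t) * A + b + c * A ^ 2 := by linarith
      _ = A := hkey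
  refine ⟨hmain, fun n => le_trans (hmain n) ?_⟩
  rw [hA]
  apply div_le_div_of_nonneg_left (by linarith) htpos (by linarith)
end

section
/- Let H be a Hermitian operator on a finite-dimensional complex inner product space with a unit eigenvector ψ₀ satisfying H ψ₀ = E₀ ψ₀, and suppose ⟨φ, H φ⟩ ≥ E₀ + Δ for every unit vector φ orthogonal to ψ₀, with Δ > 0. Then for every operator P that is both Hermitian and unitary, ⟨ψ₀, P (H − E₀) P ψ₀⟩ ≥ Δ ( 1 − |⟨ψ₀, P ψ₀⟩|² ). -/
open scoped InnerProductSpace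

/-- For a Hermitian `H` with nondegenerate ground state `ψ₀`
(eigenvalue `E₀`, spectral gap ≥ `Δ`) and any Hermitian unitary `P`,
`⟨ψ₀, P (H − E₀) P ψ₀⟩ ≥ Δ (1 − |⟨ψ₀, P ψ₀⟩|²)`. -/
theorem hermitian_unitary_ground_state_bound
    {V : Type*} [NormedAddCommGroup V] [InnerProductSpace ℂ V] [FiniteDimensional ℂ V]
    (H : V →L[ℂ] V) (hH : IsSelfAdjoint H)
    (ψ₀ : V) (hψ₀ : ‖ψ₀‖ = 1) (E₀ : ℝ) (heig : H ψ₀ = (E₀ : ℂ) • ψ₀)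
    (Δ : ℝ) (hΔ : 0 < Δ)
    (hgap : ∀ φ : V, ‖φ‖ = 1 → ⟪ψ₀, φ⟫_ℂ = 0 → E₀ + Δ ≤ (⟪φ, H φ⟫_ℂ).re)
    (P : V →L[ℂ] V) (hP : IsSelfAdjoint P) (hPu : P ∈ unitary (V →L[ℂ] V)) :
    Δ * (1 - ‖⟪ψ₀, P ψ₀⟫_ℂ‖ ^ 2)
      ≤ (⟪ψ₀, (P * (H - (E₀ : ℂ) • 1) * P) ψ₀⟫_ℂ).re := by
  set A : V →L[ℂ] V := H - (E₀ : ℂ) • 1 with hA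
  set χ : V := P ψ₀ with hχ
  set c : ℂ := ⟪ψ₀, χ⟫_ℂ with hc
  set φ : V := χ - c • ψ₀ with hφ
  -- P self-adjoint : move P across inner product
  have hPadj : ∀ x y : V, ⟪x, P y⟫_ℂ = ⟪P x, y⟫_ℂ := by
    intro x y
    conv_lhs => rw [← hP.adjoint_eq]
    exact ContinuousLinearMap.adjoint_inner_right P x y
  have hHadj : ∀ x y : V, ⟪x, H y⟫_ℂ = ⟪H x, y⟫_ℂ := by
    intro x y
    conv_lhs => rw [← hH.adjoint_eq]
    exact ContinuousLinearMap.adjoint_inner_right H x y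
  -- A ψ₀ = 0
  have hAψ : A ψ₀ = 0 := by
    simp [hA, heig, ContinuousLinearMap.sub_apply, ContinuousLinearMap.smul_apply]
  -- A self-adjointness on inners
  have hAadj : ∀ x y : V, ⟪x, A y⟫_ℂ = ⟪A x, y⟫_ℂ := by
    intro x y
    simp only [hA, ContinuousLinearMap.sub_apply, ContinuousLinearMap.smul_apply,
      ContinuousLinearMap.one_apply, inner_sub_right, inner_sub_left, inner_smul_right,
      inner_smul_left, hHadj]
    rw [Complex.conj_ofReal]
  -- ⟪ψ₀, ψ₀⟫ = 1
  have hψψ : ⟪ψ₀, ψ₀⟫_ℂ = 1 := by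
    rw [inner_self_eq_norm_sq_to_K, hψ₀]; norm_num
  -- P (P ψ₀) = ψ₀
  have hPP : P χ = ψ₀ := by
    have h1 : star P * P = 1 := (Unitary.mem_iff.mp hPu).1
    have h2 : P * P = 1 := by rwa [ContinuousLinearMap.star_eq_adjoint, hP.adjoint_eq] at h1
    calc P χ = (P * P) ψ₀ := rfl
    _ = ψ₀ := by rw [h2]; rfl
  -- ⟪χ, χ⟫ = 1
  have hχχ : ⟪χ, χ⟫_ℂ = 1 := by
    rw [hχ, hPadj, ← hχ, hPP, hψψ]
  -- ⟪ψ₀, φ⟫ = 0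
  have hψφ : ⟪ψ₀, φ⟫_ℂ = 0 := by
    simp [hφ, inner_sub_right, inner_smul_right, hψψ, ← hc, hψ₀]
  -- ⟪φ, φ⟫ = 1 - ‖c‖ ^ 2
  have hφφ : ⟪φ, φ⟫_ℂ = 1 - (‖c‖ : ℂ) ^ 2 := by
    have hχψ : ⟪χ, ψ₀⟫_ℂ = starRingEnd ℂ c := by rw [hc, ← inner_conj_symm]
    rw [hφ, inner_sub_left, inner_sub_right, inner_sub_right, inner_smul_left,
      inner_smul_right, inner_smul_left, inner_smul_right, hχχ, hψψ, hχψ, ← hc]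
    have : (starRingEnd ℂ) c * c = (‖c‖ : ℂ) ^ 2 := by
      rw [mul_comm, Complex.mul_conj]
      norm_cast
      rw [← Complex.sq_norm]
    rw [this]; ring
  have hnφ : ‖φ‖ ^ 2 = 1 - ‖c‖ ^ 2 := by
    have := hφφ
    rw [inner_self_eq_norm_sq_to_K] at this
    exact_mod_cast congrArg Complex.re this
  -- the main inner product equals ⟪φ, A φ⟫
  have hmain : ⟪ψ₀, (P * A * P) ψ₀⟫_ℂ = ⟪φ, A φ⟫_ℂ := by
    have h1 : (P * A * P) ψ₀ = P (A χ) := rfl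
    rw [h1, hPadj, ← hχ]
    have hχdec : χ = φ + c • ψ₀ := by rw [hφ]; abel
    have hAχ : A χ = A φ := by
      rw [hχdec]; simp [hAψ]
    rw [hAχ]
    conv_lhs => rw [hχdec]
    rw [inner_add_left, inner_smul_left, hAadj ψ₀ φ, hAψ]
    simp
  -- ⟪φ, A φ⟫ = ⟪φ, H φ⟫ - E₀ ⟪φ, φ⟫
  have hAφ : ⟪φ, A φ⟫_ℂ = ⟪φ, H φ⟫_ℂ - (E₀ : ℂ) * ⟪φ, φ⟫_ℂ := by
    rw [hA]
    simp only [ContinuousLinearMap.sub_apply, ContinuousLinearMap.smul_apply,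
      ContinuousLinearMap.one_apply, inner_sub_right, inner_smul_right]
  -- gap bound: Δ * ‖φ‖² ≤ re ⟪φ, A φ⟫
  have hbound : Δ * ‖φ‖ ^ 2 ≤ (⟪φ, A φ⟫_ℂ).re := by
    rcases eq_or_ne φ 0 with h0 | h0
    · simp [h0]
    · have hn : (0:ℝ) < ‖φ‖ := norm_pos_iff.mpr h0
      set u : V := (↑(‖φ‖⁻¹) : ℂ) • φ with hu
      have hun : ‖u‖ = 1 := by
        rw [hu, norm_smul]
        simp [norm_inv, hn.ne']
      have huψ : ⟪ψ₀, u⟫_ℂ = 0 := by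
        rw [hu, inner_smul_right, hψφ, mul_zero]
      have hg := hgap u hun huψ
      have huH : (⟪u, H u⟫_ℂ).re = ‖φ‖⁻¹ ^ 2 * (⟪φ, H φ⟫_ℂ).re := by
        rw [hu]
        simp only [inner_smul_left, inner_smul_right, map_smul]
        rw [Complex.conj_ofReal]
        push_cast
        rw [← mul_assoc]
        norm_cast
        rw [Complex.re_ofReal_mul]
        ring
      rw [huH] at hg
      have hφH : (E₀ + Δ) * ‖φ‖ ^ 2 ≤ (⟪φ, H φ⟫_ℂ).re := by
        have h := mul_le_mul_of_nonneg_left hg (le_of_lt (pow_pos hn 2))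
        calc (E₀ + Δ) * ‖φ‖ ^ 2 = ‖φ‖ ^ 2 * (E₀ + Δ) := by ring
        _ ≤ ‖φ‖ ^ 2 * (‖φ‖⁻¹ ^ 2 * (⟪φ, H φ⟫_ℂ).re) := h
        _ = (⟪φ, H φ⟫_ℂ).re := by
            field_simp
      rw [hAφ]
      have hre : ((⟪φ, H φ⟫_ℂ) - (E₀ : ℂ) * ⟪φ, φ⟫_ℂ).re
          = (⟪φ, H φ⟫_ℂ).re - E₀ * ‖φ‖ ^ 2 := by
        rw [Complex.sub_re, Complex.re_ofReal_mul]
        have h2 : (⟪φ, φ⟫_ℂ).re = ‖φ‖ ^ 2 := by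
          rw [hφφ, ← Complex.ofReal_pow, ← Complex.ofReal_one, ← Complex.ofReal_sub,
            Complex.ofReal_re, hnφ]
        rw [h2]
      rw [hre]
      linarith
  rw [hmain]
  calc Δ * (1 - ‖c‖ ^ 2) = Δ * ‖φ‖ ^ 2 := by rw [hnφ]
  _ ≤ _ := hbound
end

section
/- Let H be a Hermitian operator on a finite-dimensional complex inner product space and ψ a unit vector. Define E_ψ = ⟨ψ, H ψ⟩ and σ_ψ = sqrt(⟨ψ, H² ψ⟩ − ⟨ψ, H ψ⟩²). Then there exists an eigenvalue E of H with |E_ψ − E| ≤ σ_ψ. Moreover, if every pair of distinct eigenvalues of H differs by at least Δ > 0 and σ_ψ < Δ/2, then this eigenvalue is unique: there is exactly one eigenvalue E of H with |E_ψ − E| ≤ σ_ψ. -/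
open scoped InnerProductSpace

/-- For a Hermitian operator `H` and a unit vector `ψ`, with mean
`E_ψ = ⟨ψ,Hψ⟩` and standard deviation `σ_ψ`, there is an eigenvalue `E` of `H` with
`|E_ψ − E| ≤ σ_ψ`; if moreover distinct eigenvalues differ by at least `Δ > 0` and
`σ_ψ < Δ/2`, this eigenvalue is unique. -/
theorem stddev_identifies_eigenvalue
    {V : Type*} [NormedAddCommGroup V] [InnerProductSpace ℂ V] [FiniteDimensional ℂ V]
    (H : V →L[ℂ] V) (hH : IsSelfAdjoint H) (ψ : V) (hψ : ‖ψ‖ = 1) :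
    (∃ E : ℝ, Module.End.HasEigenvalue (H : V →ₗ[ℂ] V) (E : ℂ) ∧
      |(⟪ψ, H ψ⟫_ℂ).re - E|
        ≤ Real.sqrt ((⟪ψ, (H * H) ψ⟫_ℂ).re - (⟪ψ, H ψ⟫_ℂ).re ^ 2)) ∧
    (∀ Δ : ℝ, 0 < Δ →
      (∀ E E' : ℂ, Module.End.HasEigenvalue (H : V →ₗ[ℂ] V) E →
        Module.End.HasEigenvalue (H : V →ₗ[ℂ] V) E' → E ≠ E' → Δ ≤ ‖E - E'‖) →
      Real.sqrt ((⟪ψ, (H * H) ψ⟫_ℂ).re - (⟪ψ, H ψ⟫_ℂ).re ^ 2) < Δ / 2 →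
      ∃! E : ℝ, Module.End.HasEigenvalue (H : V →ₗ[ℂ] V) (E : ℂ) ∧
        |(⟪ψ, H ψ⟫_ℂ).re - E|
          ≤ Real.sqrt ((⟪ψ, (H * H) ψ⟫_ℂ).re - (⟪ψ, H ψ⟫_ℂ).re ^ 2)) := by
  have hT : LinearMap.IsSymmetric (H : V →ₗ[ℂ] V) := hH.isSymmetric
  set n := Module.finrank ℂ V with hn
  have hfr : Module.finrank ℂ V = n := rfl
  set b := hT.eigenvectorBasis hfr with hb
  set μ := hT.eigenvalues hfr with hμ
  set c : Fin n → ℂ := fun i => b.repr ψ i with hc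
  set w : Fin n → ℝ := fun i => ‖c i‖ ^ 2 with hw
  have hcc : ∀ i, (starRingEnd ℂ) (c i) * c i = ((w i : ℝ) : ℂ) := by
    intro i
    rw [mul_comm, Complex.mul_conj']
    rw [hw]; push_cast; ring
  have hHrepr : ∀ (x : V) (i : Fin n), b.repr (H x) i = (μ i : ℂ) * b.repr x i := by
    intro x i
    rw [OrthonormalBasis.repr_apply_apply, OrthonormalBasis.repr_apply_apply]
    have h1 : ⟪(H : V →ₗ[ℂ] V) (b i), x⟫_ℂ = ⟪b i, (H : V →ₗ[ℂ] V) x⟫_ℂ := hT (b i) x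
    have h2 : (H : V →ₗ[ℂ] V) (b i) = (μ i : ℂ) • b i := hT.apply_eigenvectorBasis hfr i
    rw [h2, inner_smul_left] at h1
    simp only [Complex.conj_ofReal] at h1
    exact h1.symm
  have hinner : ∀ y : V, ⟪ψ, y⟫_ℂ = ∑ i, (starRingEnd ℂ) (c i) * b.repr y i := by
    intro y
    rw [← b.repr.inner_map_map ψ y]
    simp only [PiLp.inner_apply, RCLike.inner_apply']
    rfl
  have hsumw : ∑ i, w i = 1 := by
    have h0 : (⟪ψ, ψ⟫_ℂ) = ((‖ψ‖ : ℝ) : ℂ) ^ 2 := inner_self_eq_norm_sq_to_K ψ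
    have h2 : (⟪ψ, ψ⟫_ℂ).re = 1 := by rw [h0, hψ]; norm_num
    rw [hinner ψ] at h2
    simp only [Complex.re_sum] at h2
    rw [← h2]
    refine Finset.sum_congr rfl fun i _ => ?_
    rw [show b.repr ψ i = c i from rfl, hcc i, Complex.ofReal_re]
  have h1 : (⟪ψ, H ψ⟫_ℂ).re = ∑ i, μ i * w i := by
    rw [hinner (H ψ)]
    simp only [Complex.re_sum]
    refine Finset.sum_congr rfl fun i _ => ?_
    rw [hHrepr ψ i,
      show (starRingEnd ℂ) (c i) * ((μ i : ℂ) * b.repr ψ i)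
        = (μ i : ℂ) * ((starRingEnd ℂ) (c i) * c i) by ring, hcc i,
      show (μ i : ℂ) * ((w i : ℝ) : ℂ) = ((μ i * w i : ℝ) : ℂ) by push_cast; ring,
      Complex.ofReal_re]
  have h2 : (⟪ψ, (H * H) ψ⟫_ℂ).re = ∑ i, μ i ^ 2 * w i := by
    rw [show (H * H) ψ = H (H ψ) from rfl, hinner (H (H ψ))]
    simp only [Complex.re_sum]
    refine Finset.sum_congr rfl fun i _ => ?_
    rw [hHrepr (H ψ) i, hHrepr ψ i,
      show (starRingEnd ℂ) (c i) * ((μ i : ℂ) * ((μ i : ℂ) * b.repr ψ i))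
        = (μ i : ℂ) ^ 2 * ((starRingEnd ℂ) (c i) * c i) by ring, hcc i,
      show (μ i : ℂ) ^ 2 * ((w i : ℝ) : ℂ) = ((μ i ^ 2 * w i : ℝ) : ℂ) by push_cast; ring,
      Complex.ofReal_re]
  set E := ∑ i, μ i * w i with hE
  set S := ∑ i, μ i ^ 2 * w i with hS
  have hvar : S - E ^ 2 = ∑ i, (μ i - E) ^ 2 * w i := by
    have expand : ∀ i : Fin n, (μ i - E) ^ 2 * w i
        = μ i ^ 2 * w i - 2 * E * (μ i * w i) + E ^ 2 * w i := fun i => by ring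
    rw [Finset.sum_congr rfl fun i _ => expand i]
    rw [Finset.sum_add_distrib, Finset.sum_sub_distrib, ← Finset.mul_sum, ← Finset.mul_sum]
    rw [← hS, ← hE, hsumw]
    ring
  have hwnn : ∀ i, 0 ≤ w i := fun i => sq_nonneg _
  have hi0ex : ∃ i0, w i0 ≠ 0 := by
    by_contra hcon
    push_neg at hcon
    have h0 : ∑ i, w i = 0 := Finset.sum_eq_zero fun i _ => hcon i
    rw [hsumw] at h0; norm_num at h0
  obtain ⟨i0, hi0⟩ := hi0ex
  have hkey : ∃ j, w j ≠ 0 ∧ (μ j - E) ^ 2 ≤ S - E ^ 2 := by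
    by_contra hcon
    push_neg at hcon
    have hstrict : ∑ i, (S - E ^ 2) * w i < ∑ i, (μ i - E) ^ 2 * w i := by
      apply Finset.sum_lt_sum
      · intro i _
        rcases eq_or_ne (w i) 0 with h | h
        · simp [h]
        · exact le_of_lt (mul_lt_mul_of_pos_right (hcon i h)
            (lt_of_le_of_ne (hwnn i) (Ne.symm h)))
      · exact ⟨i0, Finset.mem_univ i0,
          mul_lt_mul_of_pos_right (hcon i0 hi0)
            (lt_of_le_of_ne (hwnn i0) (Ne.symm hi0))⟩
    rw [← Finset.mul_sum, hsumw, mul_one, ← hvar] at hstrict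
    exact lt_irrefl _ hstrict
  obtain ⟨j, hj, hjle⟩ := hkey
  have hex : Module.End.HasEigenvalue (H : V →ₗ[ℂ] V) ((μ j : ℝ) : ℂ) ∧
      |(⟪ψ, H ψ⟫_ℂ).re - μ j|
        ≤ Real.sqrt ((⟪ψ, (H * H) ψ⟫_ℂ).re - (⟪ψ, H ψ⟫_ℂ).re ^ 2) := by
    constructor
    · exact hT.hasEigenvalue_eigenvalues hfr j
    · rw [h1, h2]
      have habs : |E - μ j| = Real.sqrt ((μ j - E) ^ 2) := by
        rw [Real.sqrt_sq_eq_abs, abs_sub_comm]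
      rw [habs]
      exact Real.sqrt_le_sqrt hjle
  constructor
  · exact ⟨μ j, hex⟩
  · intro Δ hΔ hgap hσ
    refine ⟨μ j, hex, ?_⟩
    intro E' ⟨hE'eig, hE'le⟩
    by_contra hne'
    have hcne : ((E' : ℂ)) ≠ ((μ j : ℝ) : ℂ) := by
      exact_mod_cast fun h => hne' (by exact_mod_cast h)
    have hgap' := hgap _ _ hE'eig hex.1 hcne
    have hnorm : ‖((E' : ℂ)) - ((μ j : ℝ) : ℂ)‖ = |E' - μ j| := by
      rw [← Complex.ofReal_sub, Complex.norm_real, Real.norm_eq_abs]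
    rw [hnorm] at hgap'
    have htri : |E' - μ j| ≤ |(⟪ψ, H ψ⟫_ℂ).re - E'| + |(⟪ψ, H ψ⟫_ℂ).re - μ j| := by
      calc |E' - μ j| = |((⟪ψ, H ψ⟫_ℂ).re - μ j) - ((⟪ψ, H ψ⟫_ℂ).re - E')| := by ring_nf
        _ ≤ |(⟪ψ, H ψ⟫_ℂ).re - μ j| + |(⟪ψ, H ψ⟫_ℂ).re - E'| := abs_sub _ _
        _ = |(⟪ψ, H ψ⟫_ℂ).re - E'| + |(⟪ψ, H ψ⟫_ℂ).re - μ j| := by ring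
    have hfin : Δ ≤ Δ / 2 + Δ / 2 := le_trans hgap' (le_trans htri
      (add_le_add (le_of_lt (lt_of_le_of_lt hE'le hσ))
        (le_of_lt (lt_of_le_of_lt hex.2 hσ))))
    linarith
end

section
/- Let H be a Hermitian operator on a finite-dimensional complex inner product space, ψ a unit vector, E_ψ = ⟨ψ, H ψ⟩, and σ = sqrt(⟨ψ, H² ψ⟩ − E_ψ²). Let E* be an eigenvalue of H with |E_ψ − E*| ≤ σ, let Π be the orthogonal projection onto the eigenspace of E*, and suppose every other eigenvalue E of H satisfies |E − E*| ≥ Δ with σ < Δ. Then 1 − ⟨ψ, Π ψ⟩ ≤ σ² / (Δ − σ)². -/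
open scoped InnerProductSpace

lemma aux_gap_lower_bound {V : Type*} [NormedAddCommGroup V] [InnerProductSpace ℂ V]
    [FiniteDimensional ℂ V]
    (T : V →ₗ[ℂ] V) (hT : T.IsSymmetric) (Estar c δ : ℝ) (hδ : 0 ≤ δ)
    (hgap : ∀ μ : ℝ, Module.End.HasEigenvalue T (μ : ℂ) → (μ : ℂ) ≠ (Estar : ℂ) →
      δ ≤ |μ - c|)
    (v : V) (hv : v ∈ (Module.End.eigenspace T (Estar : ℂ))ᗮ) :
    δ ^ 2 * ‖v‖ ^ 2 ≤ ‖T v - (c : ℂ) • v‖ ^ 2 := by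
  classical
  have hn : Module.finrank ℂ V = Module.finrank ℂ V := rfl
  have hrep : ∀ w : V, ‖w‖ ^ 2 = ∑ i, ‖(hT.eigenvectorBasis hn).repr w i‖ ^ 2 := by
    intro w
    rw [← (hT.eigenvectorBasis hn).repr.norm_map w, EuclideanSpace.norm_eq,
      Real.sq_sqrt (by positivity)]
  rw [hrep v, hrep (T v - (c : ℂ) • v), Finset.mul_sum]
  apply Finset.sum_le_sum
  intro i _
  have hrepi : (hT.eigenvectorBasis hn).repr (T v - (c : ℂ) • v) i
      = ((hT.eigenvalues hn i : ℂ) - (c : ℂ)) * (hT.eigenvectorBasis hn).repr v i := by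
    rw [map_sub, map_smul]
    simp only [PiLp.sub_apply, PiLp.smul_apply, smul_eq_mul]
    rw [hT.eigenvectorBasis_apply_self_apply hn v i]
    have : ((hT.eigenvalues hn i : ℝ) : ℂ) = RCLike.ofReal (hT.eigenvalues hn i) := rfl
    rw [this]
    ring
  rw [hrepi, norm_mul, mul_pow]
  by_cases h0 : (hT.eigenvectorBasis hn).repr v i = 0
  · simp [h0]
  · have hne : ((hT.eigenvalues hn i : ℝ) : ℂ) ≠ (Estar : ℂ) := by
      intro h
      have hbi : hT.eigenvectorBasis hn i ∈ Module.End.eigenspace T (Estar : ℂ) := by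
        have hr : hT.eigenvalues hn i = Estar := by exact_mod_cast h
        have h1 := Module.End.mem_eigenspace_iff.mp
          (hT.hasEigenvector_eigenvectorBasis hn i).1
        apply Module.End.mem_eigenspace_iff.mpr
        rw [← hr]
        exact h1
      have hz : ⟪hT.eigenvectorBasis hn i, v⟫_ℂ = 0 :=
        (Submodule.mem_orthogonal _ v).mp hv _ hbi
      exact h0 (by rw [(hT.eigenvectorBasis hn).repr_apply_apply]; exact hz)
    have hgi : δ ≤ |hT.eigenvalues hn i - c| :=
      hgap _ (hT.hasEigenvalue_eigenvalues hn i) hne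
    have hnorm : ‖((hT.eigenvalues hn i : ℝ) : ℂ) - (c : ℂ)‖ = |hT.eigenvalues hn i - c| := by
      rw [← Complex.ofReal_sub, Complex.norm_real, Real.norm_eq_abs]
    have hple : δ ^ 2 ≤ ‖((hT.eigenvalues hn i : ℝ) : ℂ) - (c : ℂ)‖ ^ 2 := by
      rw [hnorm]
      exact pow_le_pow_left₀ hδ hgi 2
    exact mul_le_mul_of_nonneg_right hple (by positivity)

/-- Standard-deviation-to-fidelity bound: if `E*` is an eigenvalue of
the Hermitian operator `H` with `|⟨ψ,Hψ⟩ − E*| ≤ σ`, every other eigenvalue is at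
distance ≥ `Δ` from `E*`, and `σ < Δ`, then the overlap with the `E*`-eigenspace
satisfies `1 − ⟨ψ, Πψ⟩ ≤ σ²/(Δ − σ)²`. -/
theorem stddev_to_fidelity_bound
    {V : Type*} [NormedAddCommGroup V] [InnerProductSpace ℂ V] [FiniteDimensional ℂ V]
    (H : V →L[ℂ] V) (hH : IsSelfAdjoint H) (ψ : V) (hψ : ‖ψ‖ = 1)
    (Estar Δ : ℝ)
    (heig : Module.End.HasEigenvalue (H : V →ₗ[ℂ] V) (Estar : ℂ))
    (hgap : ∀ E : ℂ, Module.End.HasEigenvalue (H : V →ₗ[ℂ] V) E →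
      E ≠ (Estar : ℂ) → Δ ≤ ‖E - (Estar : ℂ)‖)
    (hnear : |(⟪ψ, H ψ⟫_ℂ).re - Estar|
      ≤ Real.sqrt ((⟪ψ, (H * H) ψ⟫_ℂ).re - (⟪ψ, H ψ⟫_ℂ).re ^ 2))
    (hσΔ : Real.sqrt ((⟪ψ, (H * H) ψ⟫_ℂ).re - (⟪ψ, H ψ⟫_ℂ).re ^ 2) < Δ) :
    1 - (⟪ψ, ((Submodule.orthogonalProjectionOnto
          (Module.End.eigenspace (H : V →ₗ[ℂ] V) (Estar : ℂ)) ψ : V))⟫_ℂ).re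
      ≤ Real.sqrt ((⟪ψ, (H * H) ψ⟫_ℂ).re - (⟪ψ, H ψ⟫_ℂ).re ^ 2) ^ 2
        / (Δ - Real.sqrt ((⟪ψ, (H * H) ψ⟫_ℂ).re - (⟪ψ, H ψ⟫_ℂ).re ^ 2)) ^ 2 := by
  classical
  have hsym : (H : V →ₗ[ℂ] V).IsSymmetric :=
    ContinuousLinearMap.isSelfAdjoint_iff_isSymmetric.mp hH
  set Eψ : ℝ := (⟪ψ, H ψ⟫_ℂ).re with hEψ
  set σ : ℝ := Real.sqrt ((⟪ψ, (H * H) ψ⟫_ℂ).re - Eψ ^ 2) with hσ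
  set K := Module.End.eigenspace (H : V →ₗ[ℂ] V) (Estar : ℂ) with hK
  set p : V := (Submodule.orthogonalProjectionOnto K ψ : V) with hp
  set q : V := ψ - p with hq
  -- ⟪ψ, H ψ⟫ is real
  have hreal : ⟪ψ, H ψ⟫_ℂ = (Eψ : ℂ) := by
    have hc : (starRingEnd ℂ) ⟪ψ, H ψ⟫_ℂ = ⟪ψ, H ψ⟫_ℂ := by
      rw [inner_conj_symm]
      exact hsym ψ ψ
    exact (Complex.conj_eq_iff_re.mp hc).symm
  have hHpψ : ⟪H ψ, ψ⟫_ℂ = (Eψ : ℂ) := (hsym ψ ψ).trans hreal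
  -- σ² identity
  have h2 : ⟪ψ, (H * H) ψ⟫_ℂ = ⟪H ψ, H ψ⟫_ℂ := by
    rw [ContinuousLinearMap.mul_apply]
    exact (hsym ψ (H ψ)).symm
  have hkey : (⟪ψ, (H * H) ψ⟫_ℂ).re - Eψ ^ 2 = ‖H ψ - (Eψ : ℂ) • ψ‖ ^ 2 := by
    have e0 : ‖H ψ - (Eψ : ℂ) • ψ‖ ^ 2
        = ‖H ψ‖ ^ 2 - 2 * (⟪H ψ, (Eψ : ℂ) • ψ⟫_ℂ).re + ‖(Eψ : ℂ) • ψ‖ ^ 2 :=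
      norm_sub_sq (𝕜 := ℂ) _ _
    have e1 : ‖H ψ‖ ^ 2 = (⟪ψ, (H * H) ψ⟫_ℂ).re := by
      rw [h2]; exact InnerProductSpace.norm_sq_eq_re_inner (𝕜 := ℂ) _
    have e2 : (⟪H ψ, (Eψ : ℂ) • ψ⟫_ℂ).re = Eψ * Eψ := by
      rw [inner_smul_right, hHpψ, ← Complex.ofReal_mul]
      exact Complex.ofReal_re _
    have e3 : ‖(Eψ : ℂ) • ψ‖ ^ 2 = Eψ ^ 2 := by
      rw [norm_smul, hψ, mul_one, Complex.norm_real, Real.norm_eq_abs, sq_abs]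
    rw [e0, e1, e2, e3]; ring
  have hσnn : 0 ≤ (⟪ψ, (H * H) ψ⟫_ℂ).re - Eψ ^ 2 := hkey ▸ sq_nonneg _
  have hσsq : σ ^ 2 = ‖H ψ - (Eψ : ℂ) • ψ‖ ^ 2 := by
    rw [hσ, Real.sq_sqrt hσnn, hkey]
  have hσ0 : 0 ≤ σ := Real.sqrt_nonneg _
  have hδ0 : 0 < Δ - σ := sub_pos.mpr hσΔ
  -- membership facts
  have hpK : p ∈ K := (Submodule.orthogonalProjectionOnto K ψ).2
  have hqK : q ∈ Kᗮ := K.sub_starProjection_mem_orthogonal ψ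
  have hHp : H p = (Estar : ℂ) • p := Module.End.mem_eigenspace_iff.mp hpK
  have hinv : ∀ v ∈ Kᗮ, H v ∈ Kᗮ := by
    intro v hv
    rw [Submodule.mem_orthogonal] at hv ⊢
    intro u hu
    have hHu : H u = (Estar : ℂ) • u := Module.End.mem_eigenspace_iff.mp hu
    have h5 : ⟪u, H v⟫_ℂ = ⟪(H : V →ₗ[ℂ] V) u, v⟫_ℂ := (hsym u v).symm
    rw [h5, show (H : V →ₗ[ℂ] V) u = (Estar : ℂ) • u from hHu, inner_smul_left,
      hv u hu, mul_zero]
  -- decompose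
  set a : V := H p - (Eψ : ℂ) • p with ha
  set c : V := H q - (Eψ : ℂ) • q with hc
  have haK : a ∈ K := by
    rw [ha, hHp, ← sub_smul]
    exact K.smul_mem _ hpK
  have hcK : c ∈ Kᗮ := Submodule.sub_mem _ (hinv q hqK) (Submodule.smul_mem _ _ hqK)
  have hdecomp : H ψ - (Eψ : ℂ) • ψ = a + c := by
    have hψeq : ψ = p + q := by rw [hq]; abel
    rw [ha, hc]
    calc H ψ - (Eψ : ℂ) • ψ = H (p + q) - (Eψ : ℂ) • (p + q) := by rw [← hψeq]
    _ = H p - (Eψ : ℂ) • p + (H q - (Eψ : ℂ) • q) := by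
        rw [map_add, smul_add]; abel
  have hac : ⟪a, c⟫_ℂ = 0 := (Submodule.mem_orthogonal K c).mp hcK a haK
  have hpyth : ‖H ψ - (Eψ : ℂ) • ψ‖ ^ 2 = ‖a‖ ^ 2 + ‖c‖ ^ 2 := by
    rw [hdecomp]
    rw [@norm_add_sq ℂ, hac]
    simp
  -- lower bound on ‖c‖²
  have hgap' : ∀ μ : ℝ, Module.End.HasEigenvalue (H : V →ₗ[ℂ] V) (μ : ℂ) →
      (μ : ℂ) ≠ (Estar : ℂ) → Δ - σ ≤ |μ - Eψ| := by
    intro μ hμ hne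
    have h1 : Δ ≤ ‖(μ : ℂ) - (Estar : ℂ)‖ := hgap _ hμ hne
    have h2' : ‖(μ : ℂ) - (Estar : ℂ)‖ = |μ - Estar| := by
      rw [← Complex.ofReal_sub, Complex.norm_real, Real.norm_eq_abs]
    have h3 : |μ - Estar| ≤ |μ - Eψ| + |Eψ - Estar| := abs_sub_le μ Eψ Estar
    have h4 : |Eψ - Estar| ≤ σ := hnear
    rw [h2'] at h1
    linarith
  have hlow : (Δ - σ) ^ 2 * ‖q‖ ^ 2 ≤ ‖c‖ ^ 2 := by
    have := aux_gap_lower_bound (H : V →ₗ[ℂ] V) hsym Estar Eψ (Δ - σ) hδ0.le hgap' q hqK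
    simpa [hc] using this
  have hmain : (Δ - σ) ^ 2 * ‖q‖ ^ 2 ≤ σ ^ 2 := by
    have h1 : ‖c‖ ^ 2 ≤ σ ^ 2 := by
      rw [hσsq, hpyth]
      nlinarith [sq_nonneg ‖a‖]
    linarith
  -- ‖q‖² = 1 - re ⟪ψ, p⟫
  have hpq : ⟪p, q⟫_ℂ = 0 := (Submodule.mem_orthogonal K q).mp hqK p hpK
  have hipre : (⟪ψ, p⟫_ℂ).re = ‖p‖ ^ 2 := by
    have h1 : ⟪p, ψ⟫_ℂ = ⟪p, p⟫_ℂ := by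
      have : ⟪p, ψ - p⟫_ℂ = 0 := hpq
      rw [inner_sub_right] at this
      linear_combination this
    have h2' : (⟪ψ, p⟫_ℂ).re = (⟪p, ψ⟫_ℂ).re := by
      rw [← inner_conj_symm ψ p, Complex.conj_re]
    rw [h2', h1]
    exact (InnerProductSpace.norm_sq_eq_re_inner (𝕜 := ℂ) p).symm
  have hqnorm : ‖q‖ ^ 2 = 1 - (⟪ψ, p⟫_ℂ).re := by
    have e0 : ‖ψ - p‖ ^ 2 = ‖ψ‖ ^ 2 - 2 * (⟪ψ, p⟫_ℂ).re + ‖p‖ ^ 2 :=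
      norm_sub_sq (𝕜 := ℂ) _ _
    rw [hq]
    rw [e0]
    rw [hψ]
    rw [hipre]
    ring
  -- conclude
  rw [← hqnorm, le_div_iff₀ (by positivity : (0:ℝ) < (Δ - σ) ^ 2), mul_comm]
  exact hmain
end

section
/- Let H be a Hermitian operator on a finite-dimensional complex inner product space with smallest eigenvalue E₀ and with every other eigenvalue at distance at least Δ > 0 from E₀. Let Π₀ be the orthogonal projection onto the eigenspace of E₀, and let ψ be a unit vector with |⟨ψ, H ψ⟩ − E₀| ≤ σ, where σ = sqrt(⟨ψ, H² ψ⟩ − ⟨ψ, H ψ⟩²). If σ ≤ Δ/4, then ⟨ψ, Π₀ ψ⟩ ≥ 8/9. -/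
open scoped InnerProductSpace
open Finset

private lemma fid_aux {V : Type*} [NormedAddCommGroup V] [InnerProductSpace ℂ V]
    [FiniteDimensional ℂ V]
    (K : Submodule ℂ V) (ψ v : V) (hψ : ‖ψ‖ = 1) (hvK : v ∈ K) (q : ℝ)
    (hnormsq : ‖ψ - v‖ ^ 2 = q) (hq9 : q ≤ 1 / 9) :
    (8 : ℝ) / 9 ≤ (⟪ψ, ((Submodule.orthogonalProjectionOnto K ψ : V))⟫_ℂ).re := by
  set Pψ := Submodule.orthogonalProjectionOnto K ψ with hP
  have hinner : (⟪ψ, (Pψ : V)⟫_ℂ).re = ‖(Pψ : V)‖ ^ 2 := by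
    have h0 : ⟪ψ - (Pψ : V), (Pψ : V)⟫_ℂ = 0 :=
      K.starProjection_inner_eq_zero ψ (Pψ : V) (Submodule.coe_mem _)
    rw [inner_sub_left, sub_eq_zero] at h0
    rw [h0, ← @inner_self_eq_norm_sq ℂ]
    rfl
  have hpyth : ‖(Pψ : V)‖ ^ 2 + ‖ψ - (Pψ : V)‖ ^ 2 = 1 := by
    have h0 : ⟪(Pψ : V), ψ - (Pψ : V)⟫_ℂ = 0 :=
      inner_eq_zero_symm.mpr
        (K.starProjection_inner_eq_zero ψ (Pψ : V) (Submodule.coe_mem _))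
    have h1 := norm_add_sq_eq_norm_sq_add_norm_sq_of_inner_eq_zero _ _ h0
    have h2 : (Pψ : V) + (ψ - (Pψ : V)) = ψ := by abel
    rw [h2, hψ] at h1
    nlinarith [h1]
  have hmin : ‖ψ - (Pψ : V)‖ ^ 2 ≤ q := by
    have h0 : ⟪ψ - (Pψ : V), (Pψ : V) - v⟫_ℂ = 0 :=
      K.starProjection_inner_eq_zero ψ _ (Submodule.sub_mem K (Submodule.coe_mem _) hvK)
    have h1 := norm_add_sq_eq_norm_sq_add_norm_sq_of_inner_eq_zero _ _ h0
    have h2 : (ψ - (Pψ : V)) + ((Pψ : V) - v) = ψ - v := by abel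
    rw [h2] at h1
    have h3 : ‖ψ - v‖ ^ 2 = ‖ψ - (Pψ : V)‖ ^ 2 + ‖(Pψ : V) - v‖ ^ 2 := by
      nlinarith [h1]
    nlinarith [hnormsq, sq_nonneg ‖(Pψ : V) - v‖]
  rw [hinner]
  nlinarith [hpyth, hmin, hq9]

set_option maxHeartbeats 1000000 in
/-- Ground-state fidelity certification: if `E₀` is the smallest
eigenvalue of the Hermitian operator `H`, every other eigenvalue is at least `E₀ + Δ`,
`ψ` is a unit vector whose energy mean is within `σ` of `E₀` (where `σ` is the energy
standard deviation of `ψ`), and `σ ≤ Δ/4`, then `⟨ψ, Π₀ ψ⟩ ≥ 8/9`. -/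
theorem ground_state_fidelity_certification
    {V : Type*} [NormedAddCommGroup V] [InnerProductSpace ℂ V] [FiniteDimensional ℂ V]
    (H : V →L[ℂ] V) (hH : IsSelfAdjoint H) (ψ : V) (hψ : ‖ψ‖ = 1)
    (E₀ Δ : ℝ) (hΔ : 0 < Δ)
    (hE₀ : Module.End.HasEigenvalue (H : V →ₗ[ℂ] V) (E₀ : ℂ))
    (hgap : ∀ E : ℝ, Module.End.HasEigenvalue (H : V →ₗ[ℂ] V) (E : ℂ) →
      E ≠ E₀ → E₀ + Δ ≤ E)
    (hnear : |(⟪ψ, H ψ⟫_ℂ).re - E₀|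
      ≤ Real.sqrt ((⟪ψ, (H * H) ψ⟫_ℂ).re - (⟪ψ, H ψ⟫_ℂ).re ^ 2))
    (hσ : Real.sqrt ((⟪ψ, (H * H) ψ⟫_ℂ).re - (⟪ψ, H ψ⟫_ℂ).re ^ 2) ≤ Δ / 4) :
    (8 : ℝ) / 9 ≤ (⟪ψ, ((Submodule.orthogonalProjectionOnto
        (Module.End.eigenspace (H : V →ₗ[ℂ] V) (E₀ : ℂ)) ψ : V))⟫_ℂ).re := by
  classical
  have hT : (H : V →ₗ[ℂ] V).IsSymmetric := hH.isSymmetric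
  set n := Module.finrank ℂ V with hnd
  have hn : Module.finrank ℂ V = n := rfl
  set b := hT.eigenvectorBasis hn with hb
  set μ := hT.eigenvalues hn with hμ
  set c : Fin n → ℂ := fun i => b.repr ψ i with hc
  set p : Fin n → ℝ := fun i => ‖c i‖ ^ 2 with hp
  have hpnn : ∀ i, 0 ≤ p i := fun i => sq_nonneg _
  have hsum : ∑ i, p i = 1 := by
    have h1 : ‖b.repr ψ‖ = 1 := by rw [b.repr.norm_map, hψ]
    have h2 : ‖b.repr ψ‖ ^ 2 = ∑ i, ‖b.repr ψ i‖ ^ 2 := by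
      rw [EuclideanSpace.norm_eq, Real.sq_sqrt (by positivity)]
    show ∑ i, ‖b.repr ψ i‖ ^ 2 = 1
    rw [← h2, h1, one_pow]
  have hterm : ∀ (r : ℝ) (i : Fin n),
      ((starRingEnd ℂ) (c i) * ((r : ℂ) * c i)).re = r * p i := by
    intro r i
    have : (starRingEnd ℂ) (c i) * ((r : ℂ) * c i)
        = (r : ℂ) * ((starRingEnd ℂ) (c i) * c i) := by ring
    rw [this, Complex.conj_mul']
    simp [hp, ← Complex.ofReal_pow]
  have hrepr : ∀ i, b.repr (H ψ) i = (μ i : ℂ) * c i := by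
    intro i
    simpa using hT.eigenvectorBasis_apply_self_apply hn ψ i
  have hmean : (⟪ψ, H ψ⟫_ℂ).re = ∑ i, μ i * p i := by
    rw [← b.repr.inner_map_map ψ (H ψ), PiLp.inner_apply]
    simp only [RCLike.inner_apply, hrepr]
    rw [Complex.re_sum]
    exact Finset.sum_congr rfl fun i _ => by rw [mul_comm]; exact hterm (μ i) i
  have hrepr2 : ∀ i, b.repr ((H * H) ψ) i = ((μ i ^ 2 : ℝ) : ℂ) * c i := by
    intro i
    have h1 : (H * H) ψ = H (H ψ) := rfl
    have h2 := hT.eigenvectorBasis_apply_self_apply hn (H ψ) i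
    rw [h1]
    have h2' : b.repr (H (H ψ)) i = (μ i : ℂ) * b.repr (H ψ) i := by simpa using h2
    rw [h2', hrepr i]
    push_cast
    ring
  have hsecond : (⟪ψ, (H * H) ψ⟫_ℂ).re = ∑ i, μ i ^ 2 * p i := by
    rw [← b.repr.inner_map_map ψ ((H * H) ψ), PiLp.inner_apply]
    simp only [RCLike.inner_apply, hrepr2]
    rw [Complex.re_sum]
    exact Finset.sum_congr rfl fun i _ => by rw [mul_comm]; exact hterm (μ i ^ 2) i
  set m := ∑ i, μ i * p i with hm
  set S := ∑ i, μ i ^ 2 * p i with hS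
  have hvar : S - m ^ 2 = ∑ i, p i * (μ i - m) ^ 2 := by
    have hexp : ∀ i ∈ Finset.univ (α := Fin n), p i * (μ i - m) ^ 2
        = μ i ^ 2 * p i - (2 * m) * (μ i * p i) + m ^ 2 * p i := fun i _ => by ring
    rw [Finset.sum_congr rfl hexp, Finset.sum_add_distrib, Finset.sum_sub_distrib,
      ← Finset.mul_sum, ← Finset.mul_sum, hsum, ← hm, ← hS]
    ring
  have hvnn : 0 ≤ S - m ^ 2 := by
    rw [hvar]
    exact Finset.sum_nonneg fun i _ => mul_nonneg (hpnn i) (sq_nonneg _)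
  rw [hmean, hsecond] at hnear hσ
  have hσ2 : S - m ^ 2 ≤ (Δ / 4) ^ 2 := by
    have h := Real.sq_sqrt hvnn
    nlinarith [Real.sqrt_nonneg (S - m ^ 2)]
  have ha : |m - E₀| ≤ Δ / 4 := le_trans hnear hσ
  have hdich : ∀ i, μ i = E₀ ∨ E₀ + Δ ≤ μ i := by
    intro i
    by_cases h : μ i = E₀
    · exact Or.inl h
    · exact Or.inr (hgap (μ i) (hT.hasEigenvalue_eigenvalues hn i) h)
  set Sb := Finset.univ.filter (fun i => ¬ μ i = E₀) with hSb
  set q := ∑ i ∈ Sb, p i with hq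
  have hqnn : 0 ≤ q := Finset.sum_nonneg fun i _ => hpnn i
  have hkey : q * (3 * Δ / 4) ^ 2 ≤ S - m ^ 2 := by
    rw [hvar, hq, Finset.sum_mul]
    refine le_trans (Finset.sum_le_sum ?_)
      (Finset.sum_le_sum_of_subset_of_nonneg (Finset.subset_univ Sb)
        (fun i _ _ => mul_nonneg (hpnn i) (sq_nonneg _)))
    intro i hi
    rw [hSb, Finset.mem_filter] at hi
    have h1 : E₀ + Δ ≤ μ i := (hdich i).resolve_left hi.2
    have h2 : m - E₀ ≤ Δ / 4 := le_trans (le_abs_self _) ha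
    have h3 : 3 * Δ / 4 ≤ μ i - m := by linarith
    have h4 : (3 * Δ / 4) ^ 2 ≤ (μ i - m) ^ 2 := by nlinarith
    exact mul_le_mul_of_nonneg_left h4 (hpnn i)
  have hq9 : q ≤ 1 / 9 := by nlinarith [hkey, hσ2, mul_pos hΔ hΔ]
  -- the projection part
  set K := Module.End.eigenspace (H : V →ₗ[ℂ] V) (E₀ : ℂ) with hK
  set v := ∑ i ∈ Finset.univ.filter (fun i => μ i = E₀), c i • b i with hv
  have hvK : v ∈ K := by
    rw [hK, Module.End.mem_eigenspace_iff, hv, map_sum]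
    rw [Finset.smul_sum]
    refine Finset.sum_congr rfl fun i hi => ?_
    rw [Finset.mem_filter] at hi
    have : (H : V →ₗ[ℂ] V) (c i • b i) = c i • ((μ i : ℂ) • b i) := by
      rw [map_smul]
      congr 1
      exact hT.apply_eigenvectorBasis hn i
    rw [this, hi.2]
    rw [smul_comm]
  have hψsum : ψ = ∑ i, c i • b i := (b.sum_repr ψ).symm
  set d : Fin n → ℂ := fun i => if μ i = E₀ then 0 else c i with hd
  have hψv : ψ - v = ∑ i, d i • b i := by
    rw [hψsum, hv, Finset.sum_filter, ← Finset.sum_sub_distrib]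
    refine Finset.sum_congr rfl fun i _ => ?_
    rw [hd]
    by_cases h : μ i = E₀ <;> simp [h]
  have hnormsq : ‖ψ - v‖ ^ 2 = q := by
    have h1 : (⟪ψ - v, ψ - v⟫_ℂ) = ∑ i, (starRingEnd ℂ) (d i) * d i := by
      rw [hψv]
      exact b.orthonormal.inner_sum d d Finset.univ
    have h2 : ‖ψ - v‖ ^ 2 = (⟪ψ - v, ψ - v⟫_ℂ).re := by
      rw [← @inner_self_eq_norm_sq ℂ]
      rfl
    rw [h2, h1, Complex.re_sum, hq, hSb, Finset.sum_filter]
    refine Finset.sum_congr rfl fun i _ => ?_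
    rw [hd]
    by_cases h : μ i = E₀ <;>
      simp [h, hp, Complex.conj_mul', ← Complex.ofReal_pow]
  exact fid_aux K ψ v hψ hvK q hnormsq hq9
end
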